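/- arXiv:1709.06769 — 10 statements merged into one kernel-verified Lean document; each statement's English description precedes it below -/
import Mathlib

section
/- Let 𝒜 be a hyperplane arrangement in 𝔽_q^m, where 𝔽_q is a finite field with q elements. Then the number of points of the complement c(𝒜) = 𝔽_q^m ∖ ⋃_{i=1}^n Hᵢ equals χ_𝒜(q) = Σ_{F ∈ L(𝒜)} ν(∅,F) · q^{m − rk(F)}, where rk(F) = dim span{aᵢ : i ∈ F} and ∅ is the minimal flat. -/
/-!
Every point `v` lies on exactly the hyperplanes of the flat `F_v = {i | v ∈ H i}`, and the Möbius
recursion gives `∑_{flats G ⊆ F_v} ν ∅ G = [F_v = ∅]`. Summing over `v` and exchanging the sums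
counts the complement as `∑_F ν ∅ F * |H_F|`; for a flat `F`, `H_F` is a translate of the common
kernel of the `a i`, `i ∈ F`, which has dimension `m - rk F`.
-/

open scoped Classical

open Finset Module

section

variable {ι X : Type*}

def IsFlatOf (H : ι → Set X) (F : Finset ι) : Prop :=
  (⋂ i ∈ F, H i).Nonempty ∧ ∀ i, (i ∈ F ↔ ⋂ j ∈ F, H j ⊆ H i)

theorem sum_mobius_bot_eq_ite [Fintype ι] [DecidableEq ι] {P : Finset ι → Prop}
    {ν : Finset ι → Finset ι → ℤ} (hν₁ : ∀ F, P F → ν F F = 1)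
    (hν₂ : ∀ F F', P F → P F' → F ⊂ F' →
      ∑ G ∈ univ.filter (fun G => P G ∧ F ⊆ G ∧ G ⊆ F'), ν F G = 0)
    (h_bot : P ∅) {F' : Finset ι} (hF' : P F') :
    ∑ G ∈ univ.filter (fun G => P G ∧ G ⊆ F'), ν ∅ G = if F' = ∅ then 1 else 0 := by
  split_ifs with h
  · subst h
    have : univ.filter (fun G : Finset ι => P G ∧ G ⊆ ∅) = {∅} := by
      ext G; simp only [mem_filter, mem_univ, true_and, subset_empty, mem_singleton]
      exact ⟨And.right, fun hG => ⟨hG ▸ h_bot, hG⟩⟩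
    rw [this, sum_singleton, hν₁ _ h_bot]
  · simpa using hν₂ ∅ F' h_bot hF' (empty_ssubset.2 (nonempty_iff_ne_empty.2 h))

theorem card_filter_eq_empty_eq_sum_mobius [Fintype ι] [DecidableEq ι] [Fintype X]
    (S : X → Finset ι) {P : Finset ι → Prop} {ν : Finset ι → Finset ι → ℤ} (hν₁ : ∀ F, P F → ν F F = 1)
    (hν₂ : ∀ F F', P F → P F' → F ⊂ F' →
      ∑ G ∈ univ.filter (fun G => P G ∧ F ⊆ G ∧ G ⊆ F'), ν F G = 0)
    (h_bot : P ∅) (hS : ∀ x, P (S x)) :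
    (#(univ.filter fun x => S x = ∅) : ℤ)
      = ∑ F ∈ univ.filter P, ν ∅ F * #(univ.filter fun x => F ⊆ S x) := by
  calc (#(univ.filter fun x => S x = ∅) : ℤ)
      = ∑ x, ∑ G ∈ univ.filter (fun G => P G ∧ G ⊆ S x), ν ∅ G := by
        simp only [sum_mobius_bot_eq_ite hν₁ hν₂ h_bot (hS _), sum_boole]
    _ = ∑ x, ∑ F ∈ univ.filter P, if F ⊆ S x then ν ∅ F else 0 := by
        simp only [← filter_filter, sum_filter]
    _ = ∑ F ∈ univ.filter P, ν ∅ F * #(univ.filter fun x => F ⊆ S x) := by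
        rw [sum_comm]
        simp only [sum_ite, sum_const_zero, add_zero, sum_const, nsmul_eq_mul, mul_comm]

theorem isFlatOf_filter_mem [Fintype ι] (H : ι → Set X) (x : X) :
    IsFlatOf H (univ.filter (x ∈ H ·)) := by
  have hx : x ∈ ⋂ i ∈ univ.filter (x ∈ H ·), H i := by simp
  refine ⟨⟨x, hx⟩, fun i => ⟨fun hi => Set.biInter_subset_of_mem hi, fun hsub => ?_⟩⟩
  simpa using hsub hx

theorem natCard_forall_notMem_eq_sum_mobius [Fintype ι] [DecidableEq ι] [Finite X]
    (H : ι → Set X) {ν : Finset ι → Finset ι → ℤ} (hν₁ : ∀ F, IsFlatOf H F → ν F F = 1)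
    (hν₂ : ∀ F F', IsFlatOf H F → IsFlatOf H F' → F ⊂ F' →
      ∑ G ∈ univ.filter (fun G => IsFlatOf H G ∧ F ⊆ G ∧ G ⊆ F'), ν F G = 0)
    (h_bot : IsFlatOf H ∅) :
    (Nat.card {x // ∀ i, x ∉ H i} : ℤ)
      = ∑ F ∈ univ.filter (IsFlatOf H), ν ∅ F * Nat.card (⋂ i ∈ F, H i) := by
  have := Fintype.ofFinite X
  convert card_filter_eq_empty_eq_sum_mobius (fun x => univ.filter (x ∈ H ·)) hν₁ hν₂ h_bot
    (isFlatOf_filter_mem H) using 2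
  · rw [Nat.card_eq_fintype_card, Fintype.card_subtype]
    simp [filter_eq_empty_iff]
  · rw [Nat.card_eq_fintype_card, Fintype.card_subtype]
    congr 3
    ext x
    simp [subset_iff]

end

section

variable {ι K V : Type*} [Field K] [AddCommGroup V] [Module K V]

theorem isFlatOf_empty_hyperplanes {a : ι → Dual K V} (ha : ∀ i, a i ≠ 0) (r : ι → K) :
    IsFlatOf (fun i => {v | a i v = r i}) ∅ := by
  refine ⟨⟨0, by simp⟩, fun i => ?_⟩
  simp only [notMem_empty, false_iff, Set.iInter_of_empty, Set.iInter_univ, Set.univ_subset_iff,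
    Set.eq_univ_iff_forall, Set.mem_ofPred_eq]
  intro hall
  have hr : r i = 0 := by simpa using (hall 0).symm
  exact ha i (LinearMap.ext fun v => by simp [hall v, hr])

theorem natCard_iInter_hyperplanes [Fintype K] [FiniteDimensional K V]
    (a : ι → Dual K V) (r : ι → K) {F : Finset ι}
    (hne : (⋂ i ∈ F, {v | a i v = r i}).Nonempty) :
    Nat.card (⋂ i ∈ F, {v | a i v = r i})
      = Fintype.card K ^ (finrank K V - finrank K (Submodule.span K (a '' F))) := by
  obtain ⟨v₀, hv₀⟩ := hne
  simp only [Set.mem_iInter, Set.mem_ofPred_eq] at hv₀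
  have e : (⋂ i ∈ F, {v | a i v = r i}) ≃ (Submodule.span K (a '' F)).dualCoannihilator :=
    Equiv.subtypeEquiv (Equiv.subRight v₀) fun v => by
      rw [← SetLike.mem_coe, Submodule.coe_dualCoannihilator_span]
      simp +contextual [hv₀, sub_eq_zero]
  have hdim := Subspace.finrank_add_finrank_dualCoannihilator_eq (Submodule.span K (a '' F))
  rw [Nat.card_congr e, natCard_eq_pow_finrank (K := K), Nat.card_eq_fintype_card]
  congr 1
  omega

end

theorem stmt_1_general {K : Type*} [Field K] [Fintype K] (m n : ℕ)
    (a : Fin n → ((Fin m → K) →ₗ[K] K)) (ha : ∀ i, a i ≠ 0) (r : Fin n → K)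
    (H : Fin n → Set (Fin m → K)) (hH : ∀ i, H i = {v | a i v = r i})
    (HF : Finset (Fin n) → Set (Fin m → K)) (hHF : ∀ F, HF F = ⋂ i ∈ F, H i)
    (IsFlat : Finset (Fin n) → Prop)
    (hFlat : ∀ F, IsFlat F ↔ (HF F).Nonempty ∧ ∀ i, (i ∈ F ↔ HF F ⊆ H i))
    (ν : Finset (Fin n) → Finset (Fin n) → ℤ)
    (hν₁ : ∀ F, IsFlat F → ν F F = 1)
    (hν₂ : ∀ F F', IsFlat F → IsFlat F' → F ⊂ F' →
      ∑ G ∈ Finset.univ.filter (fun G => IsFlat G ∧ F ⊆ G ∧ G ⊆ F'), ν F G = 0)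
    (rk : Finset (Fin n) → ℕ)
    (hrk : ∀ F, rk F = Module.finrank K (Submodule.span K (a '' (F : Set (Fin n))))) :
    (Nat.card {v : Fin m → K // ∀ i, v ∉ H i} : ℤ)
      = ∑ F ∈ Finset.univ.filter IsFlat, ν ∅ F * (Fintype.card K : ℤ) ^ (m - rk F) := by
  obtain rfl : IsFlat = IsFlatOf H := funext fun F => propext <| by rw [hFlat, hHF]; rfl
  obtain rfl : H = fun i => {v | a i v = r i} := funext hH
  rw [natCard_forall_notMem_eq_sum_mobius _ hν₁ hν₂ (isFlatOf_empty_hyperplanes ha r)]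
  refine sum_congr rfl fun F hF => ?_
  rw [natCard_iInter_hyperplanes a r (mem_filter.1 hF).2.1, hrk, finrank_fin_fun, Nat.cast_pow]

theorem stmt_1 {K : Type*} [Field K] [Fintype K] (m n : ℕ) (hm : 1 ≤ m) (hn : 1 ≤ n)
    (a : Fin n → ((Fin m → K) →ₗ[K] K)) (ha : ∀ i, a i ≠ 0) (r : Fin n → K)
    (H : Fin n → Set (Fin m → K)) (hH : ∀ i, H i = {v | a i v = r i})
    (HF : Finset (Fin n) → Set (Fin m → K)) (hHF : ∀ F, HF F = ⋂ i ∈ F, H i)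
    (IsFlat : Finset (Fin n) → Prop)
    (hFlat : ∀ F, IsFlat F ↔ (HF F).Nonempty ∧ ∀ i, (i ∈ F ↔ HF F ⊆ H i))
    (ν : Finset (Fin n) → Finset (Fin n) → ℤ)
    (hν₁ : ∀ F, IsFlat F → ν F F = 1)
    (hν₂ : ∀ F F', IsFlat F → IsFlat F' → F ⊂ F' →
      ∑ G ∈ Finset.univ.filter (fun G => IsFlat G ∧ F ⊆ G ∧ G ⊆ F'), ν F G = 0)
    (rk : Finset (Fin n) → ℕ)
    (hrk : ∀ F, rk F = Module.finrank K (Submodule.span K (a '' (F : Set (Fin n))))) :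
    (Nat.card {v : Fin m → K // ∀ i, v ∉ H i} : ℤ)
      = ∑ F ∈ Finset.univ.filter IsFlat, ν ∅ F * (Fintype.card K : ℤ) ^ (m - rk F) :=
  stmt_1_general m n a ha r H hH HF hHF IsFlat hFlat ν hν₁ hν₂ rk hrk
end

section
/- Let 𝒜 be a central hyperplane arrangement over a field k and let F ⊆ F' be two flats of 𝒜. Then (−1)^{rk(F') − rk(F)} · ν(F,F') > 0, where rk(F) = dim span{aᵢ : i ∈ F}. -/
/-!
Rota's sign theorem, via Weisner's theorem. For flats `F ⊊ F'` and an index `i ∈ F' \ F`,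
summing `ν(F, ·)` over the fibres of `G ↦ cl(G ∪ {i})` shows that
`∑ ν(F, G) = 0` over the flats `F ⊆ G ⊆ F'` with `cl(G ∪ {i}) = F'`. Every such `G ≠ F'` has
rank `rk F' - 1` (adding one vector raises the rank by at most one), and there is at least one
(a maximal flat between `F` and `F'` avoiding `i`, by the exchange property). Hence `ν(F, F')` is
minus a nonempty sum of terms of sign `(-1) ^ (rk F' - rk F - 1)`, and induction on `F'` concludes.
-/

open scoped Classical

open Finset Submodule Module

theorem eq_zero_of_forall_sum_filter_le_eq_zero {α M : Type*} [PartialOrder α] [WellFoundedLT α]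
    [DecidableLE α] [AddCommGroup M] {s : Finset α} {f : α → M}
    (h : ∀ z ∈ s, ∑ y ∈ s.filter (· ≤ z), f y = 0) : ∀ z ∈ s, f z = 0 := by
  intro z
  induction z using WellFoundedLT.induction with
  | _ z ih =>
  intro hz
  have hsum := h z hz
  rwa [← add_sum_erase (s.filter (· ≤ z)) f (mem_filter.2 ⟨hz, le_rfl⟩), sum_eq_zero,
    add_zero] at hsum
  intro y hy
  obtain ⟨hyz, hy, hle⟩ := by simpa only [mem_erase, mem_filter] using hy
  exact ih y (lt_of_le_of_ne hle hyz) hy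

theorem mem_span_image_iff_forall_eq_zero {K E ι : Type*} [Field K] [AddCommGroup E] [Module K E]
    (L : ι → E →ₗ[K] K) (S : Finset ι) (f : E →ₗ[K] K) :
    f ∈ span K (L '' S) ↔ ∀ x, (∀ i ∈ S, L i x = 0) → f x = 0 := by
  constructor
  · intro hf x hx
    have hle : span K (L '' S) ≤ LinearMap.ker (Dual.eval K E x) := by
      rw [span_le]
      rintro _ ⟨i, hi, rfl⟩
      exact hx i hi
    exact hle hf
  · intro h
    have hrange : Set.range (fun i : S => L i) = L '' S := by ext; simp
    rw [← hrange]
    refine mem_span_of_iInf_ker_le_ker fun x hx => h x fun i hi => ?_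
    exact (Submodule.mem_iInf _).1 hx ⟨i, hi⟩

noncomputable section SpanFlat

variable (K : Type*) {V ι : Type*} [DivisionRing K] [AddCommGroup V] [Module K V] [Fintype ι]
  (v : ι → V)

def spanClosure (S : Finset ι) : Finset ι :=
  univ.filter fun j => v j ∈ span K (v '' S)

def IsSpanFlat (S : Finset ι) : Prop :=
  ∀ i, i ∈ S ↔ v i ∈ span K (v '' S)

def familyRank (S : Finset ι) : ℕ :=
  finrank K (span K (v '' S))

def flatsIcc [DecidableEq ι] (F F' : Finset ι) : Finset (Finset ι) :=
  univ.filter fun G => IsSpanFlat K v G ∧ F ⊆ G ∧ G ⊆ F'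

instance (S : Finset ι) : FiniteDimensional K (span K (v '' S)) :=
  Module.Finite.span_of_finite K (S.finite_toSet.image v)

variable {K v}

omit [Fintype ι] in
theorem span_image_mono {S T : Finset ι} (h : S ⊆ T) : span K (v '' S) ≤ span K (v '' T) :=
  span_mono (Set.image_mono (coe_subset.2 h))

theorem mem_spanClosure {S : Finset ι} {j : ι} :
    j ∈ spanClosure K v S ↔ v j ∈ span K (v '' S) := by
  simp [spanClosure]

theorem subset_spanClosure (S : Finset ι) : S ⊆ spanClosure K v S :=
  fun _ hj => mem_spanClosure.2 (subset_span ⟨_, hj, rfl⟩)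

theorem span_spanClosure (S : Finset ι) :
    span K (v '' spanClosure K v S) = span K (v '' S) := by
  refine le_antisymm ?_ (span_image_mono (subset_spanClosure S))
  rw [span_le]
  rintro _ ⟨j, hj, rfl⟩
  exact mem_spanClosure.1 hj

theorem isSpanFlat_spanClosure (S : Finset ι) : IsSpanFlat K v (spanClosure K v S) := by
  intro i
  rw [mem_spanClosure, span_spanClosure]

theorem IsSpanFlat.spanClosure_subset {S G : Finset ι} (hG : IsSpanFlat K v G) (h : S ⊆ G) :
    spanClosure K v S ⊆ G :=
  fun j hj => (hG j).2 (span_image_mono h (mem_spanClosure.1 hj))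

theorem IsSpanFlat.spanClosure_eq {G : Finset ι} (hG : IsSpanFlat K v G) :
    spanClosure K v G = G :=
  (hG.spanClosure_subset subset_rfl).antisymm (subset_spanClosure G)

theorem spanClosure_mono {S T : Finset ι} (h : S ⊆ T) : spanClosure K v S ⊆ spanClosure K v T :=
  (isSpanFlat_spanClosure T).spanClosure_subset (h.trans (subset_spanClosure T))

omit [Fintype ι] in
theorem familyRank_mono {S T : Finset ι} (h : S ⊆ T) : familyRank K v S ≤ familyRank K v T :=
  finrank_mono (span_image_mono h)

omit [Fintype ι] in
theorem IsSpanFlat.familyRank_lt {G T : Finset ι} (hG : IsSpanFlat K v G) (h : G ⊂ T) :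
    familyRank K v G < familyRank K v T := by
  obtain ⟨i, hiT, hiG⟩ := exists_of_ssubset h
  refine finrank_lt_finrank_of_lt (lt_of_le_of_ne (span_image_mono h.subset) fun heq => hiG ?_)
  exact (hG i).2 (heq ▸ subset_span ⟨i, hiT, rfl⟩)

variable [DecidableEq ι]

theorem familyRank_spanClosure_insert_le (i : ι) (S : Finset ι) :
    familyRank K v (spanClosure K v (insert i S)) ≤ familyRank K v S + 1 := by
  unfold familyRank
  rw [span_spanClosure, coe_insert, Set.image_insert_eq, span_insert]
  have hi : finrank K (K ∙ v i) ≤ 1 := by simpa using finrank_span_le_card {v i}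
  have := finrank_add_le_finrank_add_finrank (K ∙ v i) (span K (v '' S))
  omega

theorem IsSpanFlat.familyRank_add_one_eq {G F' : Finset ι} {i : ι} (hG : IsSpanFlat K v G)
    (hGF' : G ⊂ F') (hcl : spanClosure K v (insert i G) = F') :
    familyRank K v G + 1 = familyRank K v F' := by
  have hlt := hG.familyRank_lt hGF'
  have hle := hcl ▸ familyRank_spanClosure_insert_le (K := K) (v := v) i G
  omega

theorem IsSpanFlat.mem_spanClosure_insert_comm {G : Finset ι} {i j : ι}
    (hG : IsSpanFlat K v G) (hjG : j ∉ G) (hj : j ∈ spanClosure K v (insert i G)) :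
    i ∈ spanClosure K v (insert j G) := by
  rw [mem_spanClosure, coe_insert, Set.image_insert_eq] at hj ⊢
  exact mem_span_insert_exchange hj fun h => hjG ((hG j).2 h)

theorem mem_flatsIcc {F F' G : Finset ι} :
    G ∈ flatsIcc K v F F' ↔ IsSpanFlat K v G ∧ F ⊆ G ∧ G ⊆ F' := by
  simp [flatsIcc]

theorem IsSpanFlat.exists_spanClosure_insert_eq {F F' : Finset ι} {i : ι}
    (hF : IsSpanFlat K v F) (hF' : IsSpanFlat K v F') (hFF' : F ⊆ F') (hiF' : i ∈ F')
    (hiF : i ∉ F) : ∃ G ∈ flatsIcc K v F F', i ∉ G ∧ spanClosure K v (insert i G) = F' := by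
  obtain ⟨G, hG, hGmax⟩ := exists_max_image ((flatsIcc K v F F').filter (i ∉ ·)) card
    ⟨F, mem_filter.2 ⟨mem_flatsIcc.2 ⟨hF, subset_rfl, hFF'⟩, hiF⟩⟩
  obtain ⟨hGflat, hFG, hGF'⟩ := mem_flatsIcc.1 (mem_filter.1 hG).1
  have hiG := (mem_filter.1 hG).2
  refine ⟨G, (mem_filter.1 hG).1, hiG, ?_⟩
  by_contra hne
  obtain ⟨j, hjF', hj⟩ := exists_of_ssubset <|
    (hF'.spanClosure_subset (insert_subset hiF' hGF')).ssubset_of_ne hne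
  have hjG : j ∉ G := fun h => hj (subset_spanClosure _ (mem_insert_of_mem h))
  have hGj : G ⊂ spanClosure K v (insert j G) :=
    ssubset_of_subset_of_ne ((subset_insert j G).trans (subset_spanClosure _)) fun h =>
      hjG (h ▸ subset_spanClosure _ (mem_insert_self j G))
  have hGj_mem : spanClosure K v (insert j G) ∈ (flatsIcc K v F F').filter (i ∉ ·) :=
    mem_filter.2 ⟨mem_flatsIcc.2 ⟨isSpanFlat_spanClosure _, hFG.trans hGj.subset,
      hF'.spanClosure_subset (insert_subset hjF' hGF')⟩,
      fun h => hj (hGflat.mem_spanClosure_insert_comm hiG h)⟩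
  exact (hGmax _ hGj_mem).not_gt (card_lt_card hGj)

theorem sum_filter_spanClosure_insert_eq_zero {M : Type*} [AddCommGroup M] {f : Finset ι → M}
    {F F' : Finset ι} {i : ι}
    (hf : ∀ z, IsSpanFlat K v z → F ⊂ z → ∑ G ∈ flatsIcc K v F z, f G = 0)
    (hF' : IsSpanFlat K v F') (hFF' : F ⊆ F') (hiF' : i ∈ F') (hiF : i ∉ F) :
    ∑ G ∈ (flatsIcc K v F F').filter (fun G => spanClosure K v (insert i G) = F'), f G = 0 := by
  set z₀ := spanClosure K v (insert i F)
  have hFz₀ : F ⊆ z₀ := (subset_insert i F).trans (subset_spanClosure _)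
  let g : Finset ι → M := fun z =>
    ∑ G ∈ (flatsIcc K v F z).filter (fun G => spanClosure K v (insert i G) = z), f G
  have hg : ∀ z ∈ flatsIcc K v z₀ F', ∑ y ∈ (flatsIcc K v z₀ F').filter (· ≤ z), g y = 0 := by
    intro z hz
    obtain ⟨hzflat, hz₀z, hzF'⟩ := mem_flatsIcc.1 hz
    have hiz : i ∈ z := hz₀z (subset_spanClosure _ (mem_insert_self i F))
    calc ∑ y ∈ (flatsIcc K v z₀ F').filter (· ≤ z), g y
        = ∑ y ∈ (flatsIcc K v z₀ F').filter (· ≤ z),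
            ∑ G ∈ (flatsIcc K v F z).filter (fun G => spanClosure K v (insert i G) = y), f G := by
          refine sum_congr rfl fun y hy => sum_congr (ext fun G => ?_) fun _ _ => rfl
          have hyz : y ⊆ z := (mem_filter.1 hy).2
          simp only [mem_filter, mem_flatsIcc]
          constructor
          · rintro ⟨⟨hG, hFG, hGy⟩, hcl⟩
            exact ⟨⟨hG, hFG, hGy.trans hyz⟩, hcl⟩
          · rintro ⟨⟨hG, hFG, -⟩, hcl⟩
            exact ⟨⟨hG, hFG, hcl ▸ (subset_insert i G).trans (subset_spanClosure _)⟩, hcl⟩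
      _ = ∑ G ∈ flatsIcc K v F z, f G := by
          refine sum_fiberwise_of_maps_to (fun G hG => ?_) f
          obtain ⟨-, hFG, hGz⟩ := mem_flatsIcc.1 hG
          have hclz := hzflat.spanClosure_subset (insert_subset hiz hGz)
          exact mem_filter.2 ⟨mem_flatsIcc.2 ⟨isSpanFlat_spanClosure _,
            spanClosure_mono (insert_subset_insert i hFG), hclz.trans hzF'⟩, hclz⟩
      _ = 0 := hf z hzflat <| ssubset_of_subset_of_ne (hFz₀.trans hz₀z) fun h => hiF (h ▸ hiz)
  exact eq_zero_of_forall_sum_filter_le_eq_zero hg F' <|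
    mem_flatsIcc.2 ⟨hF', hF'.spanClosure_subset (insert_subset hiF' hFF'), subset_rfl⟩

theorem IsSpanFlat.neg_one_pow_familyRank_sub_mul_pos {f : Finset ι → ℤ} {F F' : Finset ι}
    (hF : IsSpanFlat K v F) (hf₁ : f F = 1)
    (hf : ∀ z, IsSpanFlat K v z → F ⊂ z → ∑ G ∈ flatsIcc K v F z, f G = 0)
    (hF' : IsSpanFlat K v F') (hFF' : F ⊆ F') :
    0 < (-1 : ℤ) ^ (familyRank K v F' - familyRank K v F) * f F' := by
  induction F' using Finset.strongInduction with
  | H F' ih =>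
  rcases hFF'.eq_or_ssubset with rfl | hss
  · simp [hf₁]
  obtain ⟨i, hiF', hiF⟩ := exists_of_ssubset hss
  set E := ((flatsIcc K v F F').filter fun G => spanClosure K v (insert i G) = F').erase F'
  have hsum : f F' = -∑ G ∈ E, f G := by
    have hF'E : F' ∈ (flatsIcc K v F F').filter fun G => spanClosure K v (insert i G) = F' :=
      mem_filter.2 ⟨mem_flatsIcc.2 ⟨hF', hFF', subset_rfl⟩,
        by rw [insert_eq_of_mem hiF', hF'.spanClosure_eq]⟩
    have hweisner := sum_filter_spanClosure_insert_eq_zero hf hF' hFF' hiF' hiF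
    rw [← add_sum_erase _ f hF'E] at hweisner
    exact eq_neg_of_add_eq_zero_left hweisner
  have hE : ∀ G ∈ E, IsSpanFlat K v G ∧ F ⊆ G ∧ G ⊂ F' ∧
      familyRank K v G + 1 = familyRank K v F' := by
    intro G hG
    obtain ⟨hne, hG⟩ := mem_erase.1 hG
    obtain ⟨hG, hcl⟩ := mem_filter.1 hG
    obtain ⟨hGflat, hFG, hGF'⟩ := mem_flatsIcc.1 hG
    have hGF' := ssubset_of_subset_of_ne hGF' hne
    exact ⟨hGflat, hFG, hGF', hGflat.familyRank_add_one_eq hGF' hcl⟩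
  have hEne : E.Nonempty := by
    obtain ⟨G, hG, hiG, hcl⟩ := hF.exists_spanClosure_insert_eq hF' hFF' hiF' hiF
    exact ⟨G, mem_erase.2 ⟨fun h => hiG (h ▸ hiF'), mem_filter.2 ⟨hG, hcl⟩⟩⟩
  obtain ⟨d, hd⟩ : ∃ d, familyRank K v F' - familyRank K v F = d + 1 :=
    Nat.exists_eq_add_one.2 (Nat.sub_pos_of_lt (hF.familyRank_lt hss))
  have hEd : ∀ G ∈ E, familyRank K v G - familyRank K v F = d := fun G hG => by
    have := familyRank_mono (K := K) (v := v) (hE G hG).2.1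
    have := (hE G hG).2.2.2
    omega
  calc 0 < ∑ G ∈ E, (-1 : ℤ) ^ d * f G := sum_pos (fun G hG => hEd G hG ▸
        ih G (hE G hG).2.2.1 (hE G hG).1 (hE G hG).2.1) hEne
    _ = (-1) ^ (familyRank K v F' - familyRank K v F) * f F' := by
        rw [hsum, hd, ← mul_sum, pow_succ]
        ring

end SpanFlat

theorem stmt_3_general {k : Type*} [Field k] (m n : ℕ)
    (a : Fin n → ((Fin m → k) →ₗ[k] k))
    (H : Fin n → Set (Fin m → k)) (hH : ∀ i, H i = {v | a i v = 0})
    (HF : Finset (Fin n) → Set (Fin m → k)) (hHF : ∀ F, HF F = ⋂ i ∈ F, H i)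
    (IsFlat : Finset (Fin n) → Prop)
    (hFlat : ∀ F, IsFlat F ↔ ∀ i, (i ∈ F ↔ HF F ⊆ H i))
    (ν : Finset (Fin n) → Finset (Fin n) → ℤ)
    (hν₁ : ∀ F, IsFlat F → ν F F = 1)
    (hν₂ : ∀ F F', IsFlat F → IsFlat F' → F ⊂ F' →
      ∑ G ∈ Finset.univ.filter (fun G => IsFlat G ∧ F ⊆ G ∧ G ⊆ F'), ν F G = 0)
    (rk : Finset (Fin n) → ℕ)
    (hrk : ∀ F, rk F = Module.finrank k (Submodule.span k (a '' (F : Set (Fin n)))))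
    (F F' : Finset (Fin n)) (hF : IsFlat F) (hF' : IsFlat F') (hFF' : F ⊆ F') :
    0 < (-1 : ℤ) ^ (rk F' - rk F) * ν F F' := by
  have hIsFlat : IsFlat = IsSpanFlat k a := by
    funext G
    refine propext ((hFlat G).trans (forall_congr' fun i => iff_congr Iff.rfl ?_))
    simp only [hHF, hH, Set.subset_def, Set.mem_iInter, Set.mem_ofPred_eq]
    exact (mem_span_image_iff_forall_eq_zero a G (a i)).symm
  have hrk' : rk = familyRank k a := funext hrk
  subst hIsFlat hrk'
  exact hF.neg_one_pow_familyRank_sub_mul_pos (hν₁ F hF) (hν₂ F · hF) hF' hFF'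

theorem stmt_3 {k : Type*} [Field k] (m n : ℕ) (hm : 1 ≤ m) (hn : 1 ≤ n)
    (a : Fin n → ((Fin m → k) →ₗ[k] k)) (ha : ∀ i, a i ≠ 0)
    (H : Fin n → Set (Fin m → k)) (hH : ∀ i, H i = {v | a i v = 0})
    (HF : Finset (Fin n) → Set (Fin m → k)) (hHF : ∀ F, HF F = ⋂ i ∈ F, H i)
    (IsFlat : Finset (Fin n) → Prop)
    (hFlat : ∀ F, IsFlat F ↔ ∀ i, (i ∈ F ↔ HF F ⊆ H i))
    (ν : Finset (Fin n) → Finset (Fin n) → ℤ)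
    (hν₁ : ∀ F, IsFlat F → ν F F = 1)
    (hν₂ : ∀ F F', IsFlat F → IsFlat F' → F ⊂ F' →
      ∑ G ∈ Finset.univ.filter (fun G => IsFlat G ∧ F ⊆ G ∧ G ⊆ F'), ν F G = 0)
    (rk : Finset (Fin n) → ℕ)
    (hrk : ∀ F, rk F = Module.finrank k (Submodule.span k (a '' (F : Set (Fin n)))))
    (F F' : Finset (Fin n)) (hF : IsFlat F) (hF' : IsFlat F') (hFF' : F ⊆ F') :
    0 < (-1 : ℤ) ^ (rk F' - rk F) * ν F F' :=
  stmt_3_general m n a H hH HF hHF IsFlat hFlat ν hν₁ hν₂ rk hrk F F' hF hF' hFF'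
end

section
/- Let 𝔽_q be a finite field with q elements, ψ : 𝔽_q → ℂ a nontrivial additive character (a homomorphism from (𝔽_q,+) to ℂ^× which is not identically 1), m ≥ 1 an integer, and β₁,…,β_m ∈ 𝔽_q such that Σ_{j=1}^m β_j = 0 and Σ_{j∈J} β_j ≠ 0 for every nonempty proper subset J ⊊ {1,…,m}. Then Σ_{α} ψ(Σ_{j=1}^m α_j β_j) = (−1)^{m−1} (m−1)! · q, where the sum runs over all tuples α = (α₁,…,α_m) ∈ 𝔽_q^m with pairwise distinct coordinates. -/
/-! For `β` with `m + 1` coordinates, sum `ψ (∑ αⱼ βⱼ)` over `α₀` free and `α₁, …, αₘ`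
distinct: the result is `0`, because `α₀` runs over all of `K` with coefficient `β₀ ≠ 0`. The
terms with `α₀ ∉ {α₁, …, αₘ}` form the sum we want; those with `α₀ = αᵢ` form the same kind of
sum in `m` coordinates, with `β₀` merged into `βᵢ`. Merging coordinates keeps `∑ β = 0` and
keeps every nonempty proper subsum nonzero, so the sums `S_m` satisfy `S_{m+1} = -m S_m`, and
`S_1 = q`. -/

open scoped Classical

open Finset

section Combinatorics

variable {ι κ M : Type*} [Fintype ι] [AddCommMonoid M]

def IsMinimalZeroSum (β : ι → M) : Prop :=
  ∑ j, β j = 0 ∧ ∀ J : Finset ι, J.Nonempty → J ≠ univ → ∑ j ∈ J, β j ≠ 0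

theorem Finset.ne_univ_of_notMem {J : Finset ι} (k : ι) (hk : k ∉ J) : J ≠ univ :=
  fun h => hk (h ▸ mem_univ k)

noncomputable def fiberSum (σ : ι → κ) (β : ι → M) (j : κ) : M :=
  ∑ k with σ k = j, β k

theorem sum_fiberSum (σ : ι → κ) (β : ι → M) (J : Finset κ) :
    ∑ j ∈ J, fiberSum σ β j = ∑ k with σ k ∈ J, β k := by
  rw [← sum_fiberwise_of_maps_to (g := σ) (fun k hk => (mem_filter.mp hk).2)]
  refine sum_congr rfl fun j hj => sum_congr ?_ fun _ _ => rfl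
  ext k
  simp only [mem_filter, mem_univ, true_and, iff_and_self]
  rintro rfl
  exact hj

theorem sum_mul_fiberSum {R : Type*} [Fintype κ] [NonUnitalNonAssocSemiring R] (σ : ι → κ)
    (α : κ → R) (β : ι → R) : ∑ j, α j * fiberSum σ β j = ∑ k, α (σ k) * β k := by
  simp only [fiberSum, mul_sum]
  rw [← sum_fiberwise univ σ]
  refine sum_congr rfl fun j _ => sum_congr rfl fun k hk => ?_
  rw [(mem_filter.mp hk).2]

theorem IsMinimalZeroSum.fiberSum [Fintype κ] {β : ι → M} (hβ : IsMinimalZeroSum β)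
    {σ : ι → κ} (hσ : Function.Surjective σ) : IsMinimalZeroSum (fiberSum σ β) := by
  refine ⟨by simpa [sum_fiberSum] using hβ.1, fun J hJ hJu => ?_⟩
  rw [sum_fiberSum]
  refine hβ.2 _ ?_ ?_
  · obtain ⟨j, hj⟩ := hJ
    obtain ⟨k, rfl⟩ := hσ j
    exact ⟨k, by simpa using hj⟩
  · obtain ⟨j, hj⟩ : ∃ j, j ∉ J := by simpa [eq_univ_iff_forall] using hJu
    obtain ⟨k, rfl⟩ := hσ j
    exact ne_univ_of_notMem k (by simpa using hj)

theorem IsMinimalZeroSum.ne_zero [Nontrivial ι] {β : ι → M} (hβ : IsMinimalZeroSum β)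
    (k : ι) : β k ≠ 0 := by
  obtain ⟨l, hl⟩ := exists_ne k
  simpa using hβ.2 {k} (singleton_nonempty k) (ne_univ_of_notMem l (by simpa using hl))

theorem sum_injective_fin_succ {α : Type*} [Fintype α] {n : ℕ}
    (f : (Fin (n + 1) → α) → M) :
    ∑ x ∈ univ.filter (fun x : Fin (n + 1) → α => Function.Injective x), f x =
      ∑ x ∈ univ.filter (fun x : Fin n → α => Function.Injective x),
        ∑ a with a ∉ Set.range x, f (Fin.cons a x) := by
  rw [sum_filter, ← (Fin.consEquiv fun _ => α).sum_comp, Fintype.sum_prod_type, sum_comm,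
    sum_filter]
  refine sum_congr rfl fun x _ => ?_
  simp only [Fin.consEquiv, Equiv.coe_fn_mk, Fin.cons_injective_iff, ite_and, sum_filter]
  split_ifs with hx <;> simp

theorem sum_cons_mem_range {α : Type*} [Fintype α] {n : ℕ} (f : (Fin (n + 1) → α) → M)
    {x : Fin n → α} (hx : Function.Injective x) :
    ∑ a with a ∈ Set.range x, f (Fin.cons a x) = ∑ i, f (Fin.cons (x i) x) := by
  rw [← sum_image (f := fun a => f (Fin.cons a x)) fun i _ j _ h => hx h]
  exact sum_congr (by ext; simp) fun _ _ => rfl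

theorem sum_injective_add_sum_cons_self {α : Type*} [Fintype α] {n : ℕ}
    (f : (Fin (n + 1) → α) → M) :
    ∑ x ∈ univ.filter (fun x : Fin (n + 1) → α => Function.Injective x), f x +
        ∑ x ∈ univ.filter (fun x : Fin n → α => Function.Injective x),
          ∑ i, f (Fin.cons (x i) x) =
      ∑ x ∈ univ.filter (fun x : Fin n → α => Function.Injective x),
        ∑ a, f (Fin.cons a x) := by
  rw [sum_injective_fin_succ, ← sum_add_distrib]
  refine sum_congr rfl fun x hx => ?_
  rw [← sum_cons_mem_range f (mem_filter.mp hx).2, add_comm, sum_filter_add_sum_filter_not]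

end Combinatorics

section CharacterSum

variable {K R : Type*} [Field K] [Fintype K] [CommRing R]

noncomputable def distinctSum (ψ : AddChar K R) {m : ℕ} (β : Fin m → K) : R :=
  ∑ α ∈ univ.filter (fun α : Fin m → K => Function.Injective α), ψ (∑ j, α j * β j)

theorem AddChar.sum_mul_right_eq_zero [IsDomain R] {ψ : AddChar K R} (hψ : ψ ≠ 1) {b : K}
    (hb : b ≠ 0) : ∑ a, ψ (a * b) = 0 := by
  simpa [hb] using AddChar.sum_mulShift b (AddChar.IsPrimitive.of_ne_one hψ)

theorem distinctSum_add_sum_distinctSum_fiberSum [IsDomain R] {ψ : AddChar K R} (hψ : ψ ≠ 1)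
    {n : ℕ} {β : Fin (n + 1) → K} (hβ : β 0 ≠ 0) :
    distinctSum ψ β + ∑ i : Fin n, distinctSum ψ (fiberSum (Fin.cons i id) β) = 0 := by
  have hfree : ∀ x : Fin n → K,
      ∑ a, ψ (∑ j, (Fin.cons a x : Fin (n + 1) → K) j * β j) = 0 := by
    intro x
    simp_rw [Fin.sum_univ_succ, Fin.cons_zero, Fin.cons_succ, AddChar.map_add_eq_mul, ← sum_mul,
      AddChar.sum_mul_right_eq_zero hψ hβ, zero_mul]
  have hmerge : ∀ (x : Fin n → K) i, ∑ j, x j * fiberSum (Fin.cons i id) β j =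
      ∑ j, (Fin.cons (x i) x : Fin (n + 1) → K) j * β j := by
    intro x i
    rw [sum_mul_fiberSum]
    exact sum_congr rfl fun k _ => by cases k using Fin.cases <;> rfl
  simp only [distinctSum, hmerge]
  rw [sum_comm, sum_injective_add_sum_cons_self fun x => ψ (∑ j, x j * β j)]
  exact sum_eq_zero fun x _ => hfree x

theorem distinctSum_eq_of_isMinimalZeroSum [IsDomain R] {ψ : AddChar K R} (hψ : ψ ≠ 1) :
    ∀ {n : ℕ} {β : Fin (n + 1) → K}, IsMinimalZeroSum β →
      distinctSum ψ β = (-1) ^ n * n.factorial * Fintype.card K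
  | 0, β, hβ => by
    have hβ0 : β 0 = 0 := by simpa using hβ.1
    simp [distinctSum, hβ0, Function.injective_of_subsingleton]
  | n + 1, β, hβ => by
    have h := distinctSum_add_sum_distinctSum_fiberSum hψ (hβ.ne_zero 0)
    have hσ : ∀ i, Function.Surjective (Fin.cons i id : Fin (n + 2) → Fin (n + 1)) :=
      fun i j => ⟨j.succ, rfl⟩
    simp_rw [distinctSum_eq_of_isMinimalZeroSum hψ (hβ.fiberSum (hσ _))] at h
    rw [eq_neg_of_add_eq_zero_left h]
    simp [Nat.factorial_succ, pow_succ]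
    ring

end CharacterSum

theorem stmt_4 {K : Type*} [Field K] [Fintype K]
    (ψ : K → ℂ) (hψadd : ∀ x y, ψ (x + y) = ψ x * ψ y) (hψ0 : ψ 0 = 1)
    (hψnt : ∃ x, ψ x ≠ 1)
    (m : ℕ) (hm : 1 ≤ m) (β : Fin m → K)
    (hβsum : ∑ j, β j = 0)
    (hβ : ∀ J : Finset (Fin m), J.Nonempty → J ≠ Finset.univ → ∑ j ∈ J, β j ≠ 0) :
    ∑ α ∈ Finset.univ.filter (fun α : Fin m → K => Function.Injective α),
        ψ (∑ j, α j * β j)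
      = (-1 : ℂ) ^ (m - 1) * (Nat.factorial (m - 1) : ℂ) * (Fintype.card K : ℂ) := by
  let χ : AddChar K ℂ := ⟨ψ, hψ0, hψadd⟩
  have hχ : χ ≠ 1 := AddChar.ne_one_iff.mpr hψnt
  obtain ⟨n, rfl⟩ : ∃ n, m = n + 1 := ⟨m - 1, by omega⟩
  exact distinctSum_eq_of_isMinimalZeroSum hχ ⟨hβsum, hβ⟩
end

section
/- Let 𝒜 be an essential central hyperplane arrangement in 𝔽_q^m (essential means span{a₁,…,aₙ} = (𝔽_qᵐ)*), ψ : 𝔽_q → ℂ a nontrivial additive character, and ξ ∈ (𝔽_qᵐ)* a linear functional such that for every flat F ≠ ∞ the restriction of ξ to H_F is not identically zero. For each flat F set H°_F = H_F ∖ ⋃_{i∉F} Hᵢ. Then for every flat F ∈ L(𝒜) one has Σ_{x ∈ H°_F} ψ(ξ(x)) = ν(F,∞), where ∞ = {1,…,n} is the maximal flat. -/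
open scoped Classical

/-!
Write `F(x) = {i | aᵢ x = 0}` (`vanishingIndices a x`), so that `H°_F = {x | F(x) = F}` and
`H_G = {x | G ⊆ F(x)}`. The sum `S(G)` of `ψ ∘ ξ` over `H_G` is therefore the sum over the flats
`F' ⊇ G` of the sums over the strata `H°_{F'}`, and Möbius inversion recovers the stratum sum at `F`
as `∑_{G ⊇ F} ν(F, G) S(G)`. Essentiality gives `H_∞ = 0`, so `S(∞) = ψ 0 = 1`; for a proper flat
`G`, `ψ ∘ ξ` is a nontrivial character of the subspace `H_G`, so `S(G) = 0`.
-/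

open Finset

theorem sum_moebius_mul_sum_ge_eq_self {α R : Type*} [Fintype α] [PartialOrder α] [DecidableLE α]
    [Ring R] {p : α → Prop} [DecidablePred p] {ν : α → α → ℤ} (hν_refl : ∀ x, p x → ν x x = 1)
    (hν_sum : ∀ x y, p x → p y → x < y →
      ∑ z ∈ univ.filter (fun z => p z ∧ x ≤ z ∧ z ≤ y), ν x z = 0)
    (f : α → R) {x : α} (hx : p x) :
    ∑ y ∈ univ.filter (fun y => p y ∧ x ≤ y),
      (ν x y : R) * ∑ z ∈ univ.filter (fun z => p z ∧ y ≤ z), f z = f x := by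
  calc _ = ∑ z ∈ univ.filter (fun z => p z ∧ x ≤ z),
        (∑ y ∈ univ.filter (fun y => p y ∧ x ≤ y ∧ y ≤ z), (ν x y : R)) * f z := by
        simp_rw [mul_sum, sum_mul]
        refine sum_comm' fun y z => ?_
        simp only [mem_filter, mem_univ, true_and]
        exact ⟨fun ⟨⟨hy, hxy⟩, hz, hyz⟩ => ⟨⟨hy, hxy, hyz⟩, hz, hxy.trans hyz⟩,
          fun ⟨⟨hy, hxy, hyz⟩, hz, _⟩ => ⟨⟨hy, hxy⟩, hz, hyz⟩⟩
    _ = ∑ z ∈ univ.filter (fun z => p z ∧ x ≤ z), if z = x then f z else 0 := by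
        refine sum_congr rfl fun z hz => ?_
        rw [mem_filter] at hz
        obtain ⟨-, hz, hxz⟩ := hz
        split_ifs with h
        · subst h
          have : univ.filter (fun y => p y ∧ z ≤ y ∧ y ≤ z) = {z} := by
            ext y; simp only [mem_filter, mem_univ, true_and, mem_singleton]
            exact ⟨fun ⟨_, h₁, h₂⟩ => le_antisymm h₂ h₁,
              by rintro rfl; exact ⟨hz, le_rfl, le_rfl⟩⟩
          simp [this, hν_refl z hz]
        · rw [← Int.cast_sum, hν_sum x z hx hz (lt_of_le_of_ne hxz (Ne.symm h)), Int.cast_zero,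
            zero_mul]
    _ = f x := by simp [hx]

theorem AddChar.sum_comp_linearMap_eq_zero {K W R : Type*} [Field K] [AddCommGroup W]
    [Module K W] [Fintype W] [CommRing R] [IsDomain R] {ψ : AddChar K R} (hψ : ψ ≠ 1)
    {ξ : W →ₗ[K] K} (hξ : ξ ≠ 0) : ∑ x, ψ (ξ x) = 0 := by
  obtain ⟨c, hc⟩ := AddChar.ne_one_iff.1 hψ
  obtain ⟨x, rfl⟩ := LinearMap.surjective_of_ne_zero hξ c
  exact AddChar.sum_eq_zero_of_ne_one (ψ := ψ.compAddMonoidHom ξ.toAddMonoidHom)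
    (AddChar.ne_one_iff.2 ⟨x, hc⟩)

namespace Arrangement

variable {ι K V : Type*} [Fintype ι] [Field K] [AddCommGroup V] [Module K V]

noncomputable def vanishingIndices (a : ι → V →ₗ[K] K) (x : V) : Finset ι :=
  univ.filter fun i => a i x = 0

def IsFlat (a : ι → V →ₗ[K] K) (F : Finset ι) : Prop :=
  ∀ i, i ∈ F ↔ (⋂ j ∈ F, {v | a j v = 0}) ⊆ {v | a i v = 0}

variable {a : ι → V →ₗ[K] K}

@[simp]
theorem mem_vanishingIndices {x : V} {i : ι} : i ∈ vanishingIndices a x ↔ a i x = 0 := by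
  simp [vanishingIndices]

theorem mem_iInter_iff_subset_vanishingIndices {F : Finset ι} {x : V} :
    x ∈ ⋂ j ∈ F, {v | a j v = 0} ↔ F ⊆ vanishingIndices a x := by
  simp [subset_iff]

theorem vanishingIndices_eq_iff {F : Finset ι} {x : V} :
    vanishingIndices a x = F ↔ x ∈ ⋂ j ∈ F, {v | a j v = 0} ∧ ∀ i ∉ F, a i x ≠ 0 := by
  rw [mem_iInter_iff_subset_vanishingIndices]
  refine ⟨fun h => h ▸ ⟨subset_rfl, fun i hi => by simpa using hi⟩, fun ⟨hF, hnot⟩ => ?_⟩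
  exact Subset.antisymm (fun i hi => by_contra fun h => hnot i h (by simpa using hi)) hF

@[simp]
theorem vanishingIndices_zero : vanishingIndices a 0 = univ := by
  simp [vanishingIndices]

theorem isFlat_vanishingIndices (x : V) : IsFlat a (vanishingIndices a x) := fun i =>
  ⟨fun hi _ hv => by simpa using (mem_iInter_iff_subset_vanishingIndices.1 hv) hi,
    fun h => by simpa using h (mem_iInter_iff_subset_vanishingIndices.2 subset_rfl)⟩

theorem eq_zero_of_univ_subset_vanishingIndices (hess : Submodule.span K (Set.range a) = ⊤)
    {x : V} (hx : univ ⊆ vanishingIndices a x) : x = 0 := by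
  refine (Module.forall_dual_apply_eq_zero_iff K x).1 fun φ => ?_
  have : Submodule.span K (Set.range a) ≤ LinearMap.ker (Module.Dual.eval K V x) :=
    Submodule.span_le.2 <| Set.range_subset_iff.2 fun i => by simpa using hx (mem_univ i)
  exact this (hess.symm ▸ Submodule.mem_top)

theorem isFlat_univ : IsFlat a univ := vanishingIndices_zero (a := a) ▸ isFlat_vanishingIndices 0

variable [Fintype V]

/- The sums below carry `[DecidableEq ι]` rather than classical decidability, so that their
`Finset.filter`s are syntactically those of the main theorem, where `ι = Fin n`. -/

theorem sum_subset_vanishingIndices_eq_sum_isFlat [DecidableEq ι] {R : Type*} [AddCommMonoid R]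
    (g : V → R) (G : Finset ι) :
    ∑ x ∈ univ.filter (fun x => G ⊆ vanishingIndices a x), g x =
      ∑ F ∈ univ.filter (fun F => IsFlat a F ∧ G ⊆ F),
        ∑ x ∈ univ.filter (fun x => vanishingIndices a x = F), g x := by
  rw [← sum_fiberwise_of_maps_to (g := vanishingIndices a)
    (t := univ.filter fun F => IsFlat a F ∧ G ⊆ F) fun x hx => by
    simpa using ⟨isFlat_vanishingIndices x, (mem_filter.1 hx).2⟩]
  refine sum_congr rfl fun F hF => ?_
  rw [filter_filter]
  exact sum_congr (filter_congr fun x _ => ⟨And.right, fun h => ⟨h ▸ (mem_filter.1 hF).2.2, h⟩⟩)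
    fun _ _ => rfl

variable {R : Type*} [CommRing R] {ψ : AddChar K R} {ξ : V →ₗ[K] K}

theorem sum_univ_subset_vanishingIndices [DecidableEq ι]
    (hess : Submodule.span K (Set.range a) = ⊤) :
    ∑ x ∈ univ.filter (fun x => univ ⊆ vanishingIndices a x), ψ (ξ x) = 1 := by
  rw [sum_eq_single 0]
  · simp
  · exact fun x hx hx0 =>
      (hx0 (eq_zero_of_univ_subset_vanishingIndices hess (mem_filter.1 hx).2)).elim
  · exact fun h => (h (by simp)).elim

theorem sum_subset_vanishingIndices_eq_zero [DecidableEq ι] [IsDomain R] (hψ : ψ ≠ 1)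
    {G : Finset ι} (hξ : ∃ x ∈ ⋂ j ∈ G, {v | a j v = 0}, ξ x ≠ 0) :
    ∑ x ∈ univ.filter (fun x => G ⊆ vanishingIndices a x), ψ (ξ x) = 0 := by
  let W : Submodule K V := ⨅ i ∈ G, LinearMap.ker (a i)
  have hW : ∀ x, x ∈ univ.filter (fun x => G ⊆ vanishingIndices a x) ↔ x ∈ W := by
    simp [W, subset_iff]
  obtain ⟨x, hx, hξx⟩ := hξ
  rw [sum_subtype _ hW]
  refine AddChar.sum_comp_linearMap_eq_zero hψ (ξ := ξ.domRestrict W) fun h => hξx ?_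
  exact LinearMap.congr_fun h
    ⟨x, (hW x).1 (by simpa using mem_iInter_iff_subset_vanishingIndices.1 hx)⟩

theorem sum_vanishingIndices_eq_moebius [DecidableEq ι] [IsDomain R]
    (hess : Submodule.span K (Set.range a) = ⊤)
    {ν : Finset ι → Finset ι → ℤ} (hν₁ : ∀ F, IsFlat a F → ν F F = 1)
    (hν₂ : ∀ F F', IsFlat a F → IsFlat a F' → F ⊂ F' →
      ∑ G ∈ univ.filter (fun G => IsFlat a G ∧ F ⊆ G ∧ G ⊆ F'), ν F G = 0)
    (hψ : ψ ≠ 1) (hξ : ∀ G, IsFlat a G → G ≠ univ → ∃ x ∈ ⋂ j ∈ G, {v | a j v = 0}, ξ x ≠ 0)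
    {F : Finset ι} (hF : IsFlat a F) :
    ∑ x ∈ univ.filter (fun x => vanishingIndices a x = F), ψ (ξ x) = ν F univ := by
  rw [← sum_moebius_mul_sum_ge_eq_self hν₁ hν₂
    (fun F => ∑ x ∈ univ.filter (fun x => vanishingIndices a x = F), ψ (ξ x)) hF]
  simp only [← sum_subset_vanishingIndices_eq_sum_isFlat]
  rw [sum_eq_single univ]
  · rw [sum_univ_subset_vanishingIndices hess, mul_one]
  · intro G hG hGne
    rw [sum_subset_vanishingIndices_eq_zero hψ (hξ G (mem_filter.1 hG).2.1 hGne), mul_zero]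
  · exact fun h => (h (by simpa using isFlat_univ)).elim

end Arrangement

theorem stmt_5_general {K : Type*} [Field K] [Fintype K] (m n : ℕ)
    (a : Fin n → ((Fin m → K) →ₗ[K] K))
    (hess : Submodule.span K (Set.range a) = ⊤)
    (H : Fin n → Set (Fin m → K)) (hH : ∀ i, H i = {v | a i v = 0})
    (HF : Finset (Fin n) → Set (Fin m → K)) (hHF : ∀ F, HF F = ⋂ i ∈ F, H i)
    (IsFlat : Finset (Fin n) → Prop)
    (hFlat : ∀ F, IsFlat F ↔ ∀ i, (i ∈ F ↔ HF F ⊆ H i))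
    (ν : Finset (Fin n) → Finset (Fin n) → ℤ)
    (hν₁ : ∀ F, IsFlat F → ν F F = 1)
    (hν₂ : ∀ F F', IsFlat F → IsFlat F' → F ⊂ F' →
      ∑ G ∈ Finset.univ.filter (fun G => IsFlat G ∧ F ⊆ G ∧ G ⊆ F'), ν F G = 0)
    (ψ : K → ℂ) (hψadd : ∀ x y, ψ (x + y) = ψ x * ψ y) (hψ0 : ψ 0 = 1)
    (hψnt : ∃ x, ψ x ≠ 1)
    (ξ : (Fin m → K) →ₗ[K] K)
    (hξ : ∀ F, IsFlat F → F ≠ Finset.univ → ∃ x ∈ HF F, ξ x ≠ 0)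
    (F : Finset (Fin n)) (hF : IsFlat F) :
    ∑ x ∈ Finset.univ.filter (fun x : Fin m → K => x ∈ HF F ∧ ∀ i ∉ F, x ∉ H i),
        ψ (ξ x)
      = (ν F Finset.univ : ℂ) := by
  obtain rfl : H = fun i => {v | a i v = 0} := funext hH
  obtain rfl : HF = fun F => ⋂ i ∈ F, {v | a i v = 0} := funext hHF
  obtain rfl : IsFlat = Arrangement.IsFlat a := funext fun G => propext (hFlat G)
  let χ : AddChar K ℂ := ⟨ψ, hψ0, hψadd⟩
  have hχ : χ ≠ 1 := AddChar.ne_one_iff.2 hψnt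
  calc _ = ∑ x ∈ univ.filter (fun x => Arrangement.vanishingIndices a x = F), χ (ξ x) :=
        sum_congr (filter_congr fun _ _ => Arrangement.vanishingIndices_eq_iff.symm) fun _ _ => rfl
    _ = ν F univ := Arrangement.sum_vanishingIndices_eq_moebius hess hν₁ hν₂ hχ hξ hF

theorem stmt_5 {K : Type*} [Field K] [Fintype K] (m n : ℕ) (hm : 1 ≤ m) (hn : 1 ≤ n)
    (a : Fin n → ((Fin m → K) →ₗ[K] K)) (ha : ∀ i, a i ≠ 0)
    (hess : Submodule.span K (Set.range a) = ⊤)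
    (H : Fin n → Set (Fin m → K)) (hH : ∀ i, H i = {v | a i v = 0})
    (HF : Finset (Fin n) → Set (Fin m → K)) (hHF : ∀ F, HF F = ⋂ i ∈ F, H i)
    (IsFlat : Finset (Fin n) → Prop)
    (hFlat : ∀ F, IsFlat F ↔ ∀ i, (i ∈ F ↔ HF F ⊆ H i))
    (ν : Finset (Fin n) → Finset (Fin n) → ℤ)
    (hν₁ : ∀ F, IsFlat F → ν F F = 1)
    (hν₂ : ∀ F F', IsFlat F → IsFlat F' → F ⊂ F' →
      ∑ G ∈ Finset.univ.filter (fun G => IsFlat G ∧ F ⊆ G ∧ G ⊆ F'), ν F G = 0)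
    (ψ : K → ℂ) (hψadd : ∀ x y, ψ (x + y) = ψ x * ψ y) (hψ0 : ψ 0 = 1)
    (hψnt : ∃ x, ψ x ≠ 1)
    (ξ : (Fin m → K) →ₗ[K] K)
    (hξ : ∀ F, IsFlat F → F ≠ Finset.univ → ∃ x ∈ HF F, ξ x ≠ 0)
    (F : Finset (Fin n)) (hF : IsFlat F) :
    ∑ x ∈ Finset.univ.filter (fun x : Fin m → K => x ∈ HF F ∧ ∀ i ∉ F, x ∉ H i),
        ψ (ξ x)
      = (ν F Finset.univ : ℂ) :=
  stmt_5_general m n a hess H hH HF hHF IsFlat hFlat ν hν₁ hν₂ ψ hψadd hψ0 hψnt ξ hξ F hF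
end

section
/- Let p be a prime and α ≥ 1 an integer, and work in the finite ring ℤ/p^αℤ. Then the number of pairs (z,w) ∈ (ℤ/p^αℤ)² with z·w = 0 equals (α+1)p^α − α p^{α−1}; and for λ ∈ ℤ/p^αℤ of the form λ = p^β u with u a unit and 0 ≤ β ≤ α−1, the number of pairs (z,w) ∈ (ℤ/p^αℤ)² with z·w = λ equals (β+1)(p−1)p^{α−1}. -/
/-
Multiplying `z` by a unit does not change the number of solutions `w` of `z * w = c`, and every
`z ∈ ℤ/nℤ` is a unit multiple of `d = gcd(n, z)`. The equation `d * w = c` has `d` solutions if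
`d ∣ c` and none otherwise, and `φ(n / d)` residues `z` have `gcd(n, z) = d`, so the number of pairs
with `z * w = c` is `∑ d ∣ n, [d ∣ c] d φ(n / d)`. For `n = p ^ α` the divisor `p ^ i` contributes
`p ^ i φ(p ^ (α - i)) = (p - 1) p ^ (α - 1)` when `i < α` and `p ^ i ∣ c`; for `c = p ^ β u` these
are the `i ≤ β`, while for `c = 0` all `i < α` count, together with `p ^ α` from `i = α`.
-/

open Finset
open scoped Nat

theorem Nat.card_subtype_prod_eq_sum {α β : Type*} [Fintype α] [Finite β] (P : α → β → Prop) :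
    Nat.card {x : α × β // P x.1 x.2} = ∑ a, Nat.card {b // P a b} := by
  rw [Nat.card_congr (Equiv.subtypeProdEquivSigmaSubtype P), Nat.card_sigma]

theorem card_mul_left_eq_of_dvd {R : Type*} [Ring R] {a b : R} (h : a ∣ b) :
    Nat.card {w : R // a * w = b} = Nat.card {w : R // a * w = 0} := by
  obtain ⟨w₀, rfl⟩ := h
  exact Nat.card_congr
    { toFun w := ⟨w - w₀, by rw [mul_sub, w.2, sub_self]⟩
      invFun w := ⟨w + w₀, by rw [mul_add, w.2, zero_add]⟩
      left_inv w := by simp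
      right_inv w := by simp }

theorem card_mul_left_eq_zero_of_not_dvd {M : Type*} [Semigroup M] {a b : M} (h : ¬a ∣ b) :
    Nat.card {w : M // a * w = b} = 0 :=
  Nat.card_eq_zero.mpr (Or.inl ⟨fun ⟨w, hw⟩ => h ⟨w, hw.symm⟩⟩)

theorem Associated.card_mul_left_eq {M : Type*} [Monoid M] {a b : M} (h : Associated a b)
    (c : M) : Nat.card {w : M // a * w = c} = Nat.card {w : M // b * w = c} := by
  obtain ⟨u, rfl⟩ := h
  exact Nat.card_congr <| Equiv.subtypeEquiv (Units.mulLeft u⁻¹) fun w => by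
    simp [mul_assoc]

theorem Nat.totient_prime_pow_sub_mul_pow {p α i : ℕ} (hp : p.Prime) (hi : i < α) :
    φ (p ^ (α - i)) * p ^ i = p ^ (α - 1) * (p - 1) := by
  rw [Nat.totient_prime_pow hp (by omega), mul_right_comm, ← pow_add,
    show α - i - 1 + i = α - 1 by omega]

namespace ZMod

section

variable {n : ℕ} [NeZero n]

theorem associated_gcd_val (z : ZMod n) : Associated ((n.gcd z.val : ℕ) : ZMod n) z := by
  obtain ⟨d, hd, u, hu, rfl⟩ := eq_unit_mul_divisor z
  have hgcd : n.gcd (u * d : ZMod n).val = d := by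
    rw [← hu.unit_spec, show ((hu.unit : ZMod n) * d) = ((hu.unit : ZMod n).val * d : ℕ) by
      push_cast [natCast_val, cast_id]; rfl, val_natCast, Nat.gcd_comm, ← Nat.gcd_rec,
      Nat.gcd_comm, Nat.Coprime.gcd_mul_left_cancel _ (val_coe_unit_coprime _),
      Nat.gcd_eq_left hd]
  rw [hgcd, mul_comm]
  exact associated_mul_unit_right _ _ hu

theorem card_natCast_mul_eq_zero {d : ℕ} (hd : d ∣ n) :
    Nat.card {w : ZMod n // (d : ZMod n) * w = 0} = d := by
  obtain ⟨m, rfl⟩ := hd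
  have hd_pos : 0 < d := Nat.pos_of_ne_zero (left_ne_zero_of_mul (NeZero.ne (d * m)))
  have : NeZero m := ⟨right_ne_zero_of_mul (NeZero.ne (d * m))⟩
  -- multiplication by `d` and reduction modulo `m` have the same kernel
  let f := (castHom (dvd_mul_left m d) (ZMod m)).toAddMonoidHom
  have hker (w : ZMod (d * m)) : (d : ZMod (d * m)) * w = 0 ↔ w ∈ f.ker := by
    rw [f.mem_ker, show f w = cast w from rfl, cast_eq_val, natCast_eq_zero_iff,
      ← natCast_zmod_val w, ← Nat.cast_mul, natCast_eq_zero_iff, val_natCast_of_lt (val_lt w),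
      Nat.mul_dvd_mul_iff_left hd_pos]
  have hindex := f.ker.card_mul_index
  rw [AddSubgroup.index_ker, AddMonoidHom.range_eq_top.mpr (ringHom_surjective _),
    AddSubgroup.card_top, Nat.card_zmod, Nat.card_zmod] at hindex
  rw [Nat.card_congr (Equiv.subtypeEquivRight hker)]
  exact Nat.eq_of_mul_eq_mul_right (NeZero.pos m) hindex

theorem sum_gcd_val_eq_sum_divisors {M : Type*} [AddCommMonoid M] (g : ℕ → M) :
    ∑ z : ZMod n, g (n.gcd z.val) = ∑ d ∈ n.divisors, φ (n / d) • g d := by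
  have hval : ∑ z : ZMod n, g (n.gcd z.val) = ∑ k ∈ range n, g (n.gcd k) :=
    sum_nbij' val (fun k => (k : ZMod n)) (fun z _ => mem_range.mpr (val_lt z))
      (fun _ _ => mem_univ _) (fun z _ => natCast_zmod_val z)
      (fun k hk => val_natCast_of_lt (mem_range.mp hk)) (fun _ _ => rfl)
  rw [hval, ← sum_fiberwise_of_maps_to (t := n.divisors) (g := n.gcd)
    fun k _ => Nat.mem_divisors.mpr ⟨Nat.gcd_dvd_left n k, NeZero.ne n⟩]
  refine sum_congr rfl fun d hd => ?_
  rw [sum_congr rfl fun k hk => congrArg g (mem_filter.mp hk).2, sum_const,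
    Nat.totient_div_of_dvd (Nat.dvd_of_mem_divisors hd)]

open scoped Classical in
theorem card_mul_eq_sum_divisors (c : ZMod n) :
    Nat.card {zw : ZMod n × ZMod n // zw.1 * zw.2 = c} =
      ∑ d ∈ n.divisors, φ (n / d) * if (d : ZMod n) ∣ c then d else 0 := by
  have hfiber (z : ZMod n) : Nat.card {w // z * w = c} =
      if ((n.gcd z.val : ℕ) : ZMod n) ∣ c then n.gcd z.val else 0 := by
    rw [← (associated_gcd_val z).card_mul_left_eq]
    split_ifs with h
    · rw [card_mul_left_eq_of_dvd h, card_natCast_mul_eq_zero (Nat.gcd_dvd_left _ _)]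
    · exact card_mul_left_eq_zero_of_not_dvd h
  simp only [Nat.card_subtype_prod_eq_sum (fun z w : ZMod n => z * w = c), hfiber,
    sum_gcd_val_eq_sum_divisors fun d => if (d : ZMod n) ∣ c then d else 0, smul_eq_mul]

end

variable {p α : ℕ}

theorem natCast_pow_eq_zero_iff (hp : 1 < p) {j : ℕ} : (p : ZMod (p ^ α)) ^ j = 0 ↔ α ≤ j := by
  rw [← Nat.cast_pow, natCast_eq_zero_iff, Nat.pow_dvd_pow_iff_le_right hp]

theorem natCast_pow_dvd_natCast_pow_mul_unit_iff (hp : 1 < p) {β i : ℕ} (hβ : β < α)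
    {u : ZMod (p ^ α)} (hu : IsUnit u) :
    (p : ZMod (p ^ α)) ^ i ∣ p ^ β * u ↔ i ≤ β := by
  rw [hu.dvd_mul_right]
  refine ⟨fun ⟨x, hx⟩ => ?_, pow_dvd_pow _⟩
  by_contra! hβi
  -- `p ^ i ∣ p ^ β` would make `p ^ (α - 1)` a multiple of `p ^ α = 0`
  have : (p : ZMod (p ^ α)) ^ (α - 1) = 0 := by
    rw [show α - 1 = α - 1 - β + β by omega, pow_add, hx, ← mul_assoc, ← pow_add,
      (natCast_pow_eq_zero_iff hp).mpr (by omega), zero_mul]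
  exact absurd ((natCast_pow_eq_zero_iff hp).mp this) (by omega)

open scoped Classical in
theorem card_mul_eq_sum_range_prime_pow (hp : p.Prime) (c : ZMod (p ^ α)) :
    Nat.card {zw : ZMod (p ^ α) × ZMod (p ^ α) // zw.1 * zw.2 = c} =
      ∑ i ∈ range (α + 1), φ (p ^ (α - i)) * if (p : ZMod (p ^ α)) ^ i ∣ c then p ^ i else 0 := by
  have : NeZero p := ⟨hp.ne_zero⟩
  rw [card_mul_eq_sum_divisors, Nat.divisors_prime_pow hp, sum_map]
  refine sum_congr rfl fun i hi => ?_
  simp only [Function.Embedding.coeFn_mk, Nat.cast_pow,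
    Nat.pow_div (Nat.le_of_lt_succ (mem_range.mp hi)) hp.pos]
  congr

theorem card_mul_eq_zero_prime_pow (hp : p.Prime) :
    Nat.card {zw : ZMod (p ^ α) × ZMod (p ^ α) // zw.1 * zw.2 = 0} =
      α * (p ^ (α - 1) * (p - 1)) + p ^ α := by
  rw [card_mul_eq_sum_range_prime_pow hp, sum_range_succ]
  simp only [dvd_zero, if_true, Nat.sub_self, pow_zero, Nat.totient_one, one_mul]
  rw [sum_congr rfl fun i hi => Nat.totient_prime_pow_sub_mul_pow hp (mem_range.mp hi),
    sum_const, card_range, smul_eq_mul]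

theorem card_mul_eq_prime_pow_mul_unit (hp : p.Prime) {β : ℕ} (hβ : β < α) {u : ZMod (p ^ α)}
    (hu : IsUnit u) :
    Nat.card {zw : ZMod (p ^ α) × ZMod (p ^ α) // zw.1 * zw.2 = p ^ β * u} =
      (β + 1) * (p ^ (α - 1) * (p - 1)) := by
  have hrange : {i ∈ range (α + 1) | i ≤ β} = range (β + 1) := by
    ext i
    simp only [mem_filter, mem_range]
    omega
  simp only [card_mul_eq_sum_range_prime_pow hp,
    natCast_pow_dvd_natCast_pow_mul_unit_iff hp.one_lt hβ hu, mul_ite, mul_zero, ← sum_filter,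
    hrange]
  rw [sum_congr rfl fun i hi => Nat.totient_prime_pow_sub_mul_pow hp (by
    simp only [mem_range] at hi; omega), sum_const, card_range, smul_eq_mul]

end ZMod

theorem stmt_8 (p : ℕ) (hp : p.Prime) (α : ℕ) (hα : 1 ≤ α) :
    (Nat.card {zw : ZMod (p ^ α) × ZMod (p ^ α) // zw.1 * zw.2 = 0} : ℤ)
        = (α + 1) * (p : ℤ) ^ α - α * (p : ℤ) ^ (α - 1) ∧
    ∀ (lam : ZMod (p ^ α)) (β : ℕ) (u : ZMod (p ^ α)), IsUnit u → β ≤ α - 1 →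
      lam = (p : ZMod (p ^ α)) ^ β * u →
      (Nat.card {zw : ZMod (p ^ α) × ZMod (p ^ α) // zw.1 * zw.2 = lam} : ℤ)
        = (β + 1) * ((p : ℤ) - 1) * (p : ℤ) ^ (α - 1) := by
  constructor
  · obtain ⟨k, rfl⟩ := Nat.exists_eq_add_of_le' hα
    rw [ZMod.card_mul_eq_zero_prime_pow hp]
    push_cast [hp.one_le]
    ring
  · rintro _ β u hu hβ rfl
    rw [ZMod.card_mul_eq_prime_pow_mul_unit hp (by omega) hu]
    push_cast [hp.one_le]
    ring
end

section
/- Let p be a prime, n, m ≥ 1 integers, f₁,…,f_m ∈ ℤ_p[x₁,…,x_n] polynomials with p-adic integer coefficients, and let μ be the Haar measure on ℤ_p^n normalized so that μ(ℤ_p^n) = 1. Write ‖f(x)‖ = max_{1≤j≤m} ‖f_j(x)‖_p, and for each integer α ≥ 0 let B_α denote the number of points y ∈ (ℤ/p^αℤ)^n with f̄_j(y) = 0 for all j, where f̄_j is the reduction of f_j modulo p^α (so B₀ = 1). Then for every real number s > 0 one has ∫_{ℤ_p^n} ‖f(x)‖^s dμ(x) = Σ_{α=0}^∞ p^{−αs}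 ( B_α p^{−αn} − B_{α+1} p^{−(α+1)n} ), where the series on the right converges. -/
/-!
Put `N x = max_j ‖f_j(x)‖`. Since `‖f_j(x)‖ ≤ p^{-α}` means `f_j(x) ≡ 0 mod p^α`, the sublevel set
`{N ≤ p^{-α}}` is the preimage of the `B_α` zeros mod `p^α` under coordinatewise reduction. The
fibres of that reduction are the closed balls of radius `p^{-α}` of the sup metric; by translation
invariance they all have measure `p^{-αn}`, so `μ {N ≤ p^{-α}} = B_α p^{-αn}`. As `N` takes only the
values `0` and `p^{-k}`, `N^s = ∑_α p^{-αs} 1_{p^{-(α+1)} < N ≤ p^{-α}}`, and integrating term by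
term (the terms are dominated by a geometric series) gives the formula.
-/

open MeasureTheory Metric Set
open scoped ENNReal

theorem iSup_norm_le_iff {E κ : Type*} [SeminormedAddGroup E] [Finite κ] (g : κ → E) {r : ℝ}
    (hr : 0 ≤ r) : ⨆ j, ‖g j‖ ≤ r ↔ ∀ j, ‖g j‖ ≤ r :=
  ⟨fun h j => (le_ciSup (finite_range _).bddAbove j).trans h, fun h => Real.iSup_le h hr⟩

theorem exists_norm_eq_iSup_norm {E κ : Type*} [SeminormedAddGroup E] [Finite κ] (g : κ → E) :
    ∃ z : E, ‖z‖ = ⨆ j, ‖g j‖ := by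
  cases isEmpty_or_nonempty κ
  · exact ⟨0, by rw [norm_zero, Real.iSup_of_isEmpty]⟩
  · obtain ⟨j, hj⟩ := exists_eq_ciSup_of_finite (f := fun j => ‖g j‖)
    exact ⟨g j, hj⟩

theorem summable_rpow_neg_mul_measureReal {X : Type*} [MeasurableSpace X] (μ : Measure X)
    [IsFiniteMeasure μ] (t : ℕ → Set X) {r s : ℝ} (hr : 1 < r) (hs : 0 < s) :
    Summable fun α : ℕ => r ^ (-(α : ℝ) * s) * μ.real (t α) := by
  have hgeom : ∀ α : ℕ, r ^ (-(α : ℝ) * s) = (r ^ (-s)) ^ α := fun α => by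
    rw [← Real.rpow_natCast, ← Real.rpow_mul (by positivity), mul_comm, neg_mul, mul_neg]
  refine Summable.of_nonneg_of_le (fun α => by positivity)
    (fun α => mul_le_mul_of_nonneg_left (measureReal_mono (subset_univ (t α))) (by positivity)) ?_
  simp only [hgeom]
  exact (summable_geometric_of_lt_one (by positivity)
    (Real.rpow_lt_one_of_one_lt_of_neg hr (neg_lt_zero.2 hs))).mul_right _

theorem measureReal_preimage_Ioc {X : Type*} [MeasurableSpace X] (μ : Measure X)
    [IsFiniteMeasure μ] {N : X → ℝ} (hN : Measurable N) {a b : ℝ} (hab : a ≤ b) :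
    μ.real (N ⁻¹' Ioc a b) = μ.real (N ⁻¹' Iic b) - μ.real (N ⁻¹' Iic a) := by
  have hdiff : N ⁻¹' Ioc a b = N ⁻¹' Iic b \ N ⁻¹' Iic a := by
    ext x
    simp [and_comm]
  rw [hdiff, measureReal_sdiff (preimage_mono (Iic_subset_Iic.2 hab)) (hN measurableSet_Iic)]

namespace PadicInt

variable {p : ℕ} [Fact p.Prime]

theorem toZModPow_eq_zero_iff_norm_le (α : ℕ) (z : ℤ_[p]) :
    toZModPow α z = 0 ↔ ‖z‖ ≤ (p : ℝ) ^ (-(α : ℤ)) := by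
  rw [norm_le_pow_iff_mem_span_pow, ← ker_toZModPow, RingHom.mem_ker]

theorem toZModPow_eq_iff_dist_le (α : ℕ) (z w : ℤ_[p]) :
    toZModPow α z = toZModPow α w ↔ dist z w ≤ (p : ℝ) ^ (-(α : ℤ)) := by
  rw [dist_eq_norm, ← toZModPow_eq_zero_iff_norm_le, map_sub, sub_eq_zero]

theorem norm_rpow_eq_tsum_indicator (z : ℤ_[p]) {s : ℝ} (hs : 0 < s) :
    ‖z‖ ^ s = ∑' α : ℕ, (Ioc ((p : ℝ) ^ (-((α + 1 : ℕ) : ℤ))) ((p : ℝ) ^ (-(α : ℤ)))).indicator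
      (fun _ => (p : ℝ) ^ (-(α : ℝ) * s)) ‖z‖ := by
  have hp : (1 : ℝ) < p := by exact_mod_cast (Fact.out : p.Prime).one_lt
  by_cases hz : z = 0
  · rw [hz, norm_zero, Real.zero_rpow hs.ne', eq_comm]
    exact (tsum_congr fun α => indicator_of_notMem (fun h => h.1.not_ge (by positivity)) _).trans
      tsum_zero
  have hmem : ∀ α : ℕ, (p : ℝ) ^ (-(z.valuation : ℤ)) ∈
      Ioc ((p : ℝ) ^ (-((α + 1 : ℕ) : ℤ))) ((p : ℝ) ^ (-(α : ℤ))) ↔ α = z.valuation := by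
    intro α
    rw [mem_Ioc, zpow_lt_zpow_iff_right₀ hp, zpow_le_zpow_iff_right₀ hp]
    omega
  rw [norm_eq_zpow_neg_valuation hz, tsum_eq_single z.valuation
    fun α hα => indicator_of_notMem (fun h => hα ((hmem α).1 h)) _,
    indicator_of_mem ((hmem _).2 rfl), ← Real.rpow_intCast, ← Real.rpow_mul (by positivity)]
  push_cast
  ring_nf

section Reduction

variable {ι : Type*}

noncomputable def reduceModPow (α : ℕ) (x : ι → ℤ_[p]) : ι → ZMod (p ^ α) :=
  fun i => toZModPow α (x i)

theorem reduceModPow_surjective (α : ℕ) :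
    Function.Surjective (reduceModPow (p := p) (ι := ι) α) := fun c =>
  ⟨fun i => (ZMod.ringHom_surjective (toZModPow α) (c i)).choose,
    funext fun i => (ZMod.ringHom_surjective (toZModPow α) (c i)).choose_spec⟩

variable [Fintype ι]

theorem reduceModPow_preimage_singleton (α : ℕ) (x : ι → ℤ_[p]) :
    reduceModPow α ⁻¹' {reduceModPow α x} = closedBall x ((p : ℝ) ^ (-(α : ℤ))) := by
  ext y
  rw [mem_preimage, mem_singleton_iff, mem_closedBall, dist_pi_le_iff (by positivity), funext_iff]
  exact forall_congr' fun i => toZModPow_eq_iff_dist_le α (y i) (x i)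

variable [MeasurableSpace ℤ_[p]] [BorelSpace ℤ_[p]]

theorem measurableSet_reduceModPow_preimage_singleton (α : ℕ) (c : ι → ZMod (p ^ α)) :
    MeasurableSet (reduceModPow α ⁻¹' {c}) := by
  obtain ⟨x, rfl⟩ := reduceModPow_surjective α c
  rw [reduceModPow_preimage_singleton]
  exact measurableSet_closedBall

variable (μ : Measure (ι → ℤ_[p])) [μ.IsAddLeftInvariant]

theorem measure_reduceModPow_preimage_eq_card_mul (α : ℕ) (t : Set (ι → ZMod (p ^ α))) :
    μ (reduceModPow α ⁻¹' t) = Nat.card t * μ (closedBall 0 ((p : ℝ) ^ (-(α : ℤ)))) := by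
  have hfiber : ∀ c : ι → ZMod (p ^ α),
      μ (reduceModPow α ⁻¹' {c}) = μ (closedBall 0 ((p : ℝ) ^ (-(α : ℤ)))) := by
    intro c
    obtain ⟨x, rfl⟩ := reduceModPow_surjective α c
    rw [reduceModPow_preimage_singleton, ← measure_preimage_add μ x,
      preimage_add_left_closedBall, neg_add_cancel]
  rw [← tsum_measure_preimage_singleton t.toFinite.countable
    fun c _ => measurableSet_reduceModPow_preimage_singleton α c]
  simp only [hfiber, ENNReal.tsum_const, ENat.card_eq_coe_natCard, ENat.toENNReal_coe]

theorem measure_closedBall_zero_pow [IsProbabilityMeasure μ] (α : ℕ) :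
    μ (closedBall 0 ((p : ℝ) ^ (-(α : ℤ)))) = ((p ^ (α * Fintype.card ι) : ℕ) : ℝ≥0∞)⁻¹ := by
  have h := measure_reduceModPow_preimage_eq_card_mul μ α univ
  rw [preimage_univ, measure_univ, Nat.card_univ, Nat.card_fun, Nat.card_zmod,
    Nat.card_eq_fintype_card, ← pow_mul] at h
  exact ENNReal.eq_inv_of_mul_eq_one_left (by rw [mul_comm, h])

theorem measure_reduceModPow_preimage [IsProbabilityMeasure μ] (α : ℕ)
    (t : Set (ι → ZMod (p ^ α))) :
    μ (reduceModPow α ⁻¹' t) = Nat.card t * ((p ^ (α * Fintype.card ι) : ℕ) : ℝ≥0∞)⁻¹ := by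
  rw [measure_reduceModPow_preimage_eq_card_mul, measure_closedBall_zero_pow]

end Reduction

theorem setOf_iSup_norm_eval_le {σ κ : Type*} [Finite κ] (f : κ → MvPolynomial σ ℤ_[p]) (α : ℕ) :
    {x : σ → ℤ_[p] | ⨆ j, ‖MvPolynomial.eval x (f j)‖ ≤ (p : ℝ) ^ (-(α : ℤ))}
      = reduceModPow α ⁻¹'
          {y | ∀ j, MvPolynomial.eval y (MvPolynomial.map (toZModPow α) (f j)) = 0} := by
  ext x
  rw [mem_ofPred_eq, iSup_norm_le_iff _ (by positivity), mem_preimage, mem_ofPred_eq]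
  refine forall_congr' fun j => ?_
  rw [← toZModPow_eq_zero_iff_norm_le, MvPolynomial.map_eval]
  rfl

theorem measureReal_setOf_iSup_norm_eval_le [MeasurableSpace ℤ_[p]] [BorelSpace ℤ_[p]]
    {σ κ : Type*} [Fintype σ] [Finite κ] (μ : Measure (σ → ℤ_[p])) [μ.IsAddLeftInvariant]
    [IsProbabilityMeasure μ] (f : κ → MvPolynomial σ ℤ_[p]) (α : ℕ) :
    μ.real {x | ⨆ j, ‖MvPolynomial.eval x (f j)‖ ≤ (p : ℝ) ^ (-(α : ℤ))}
      = Nat.card {y : σ → ZMod (p ^ α) //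
          ∀ j, MvPolynomial.eval y (MvPolynomial.map (toZModPow α) (f j)) = 0}
        * (p : ℝ) ^ (-((α * Fintype.card σ : ℕ) : ℤ)) := by
  rw [measureReal_def, setOf_iSup_norm_eval_le, measure_reduceModPow_preimage,
    ENNReal.toReal_mul, ENNReal.toReal_inv, zpow_neg, zpow_natCast]
  norm_cast

theorem integral_rpow_eq_tsum_mul_measureReal {X : Type*} [MeasurableSpace X]
    (μ : Measure X) [IsFiniteMeasure μ] {N : X → ℝ} (hN : Measurable N)
    (hN_norm : ∀ x, ∃ z : ℤ_[p], ‖z‖ = N x) {s : ℝ} (hs : 0 < s) :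
    ∫ x, N x ^ s ∂μ = ∑' α : ℕ, (p : ℝ) ^ (-(α : ℝ) * s) *
      μ.real (N ⁻¹' Ioc ((p : ℝ) ^ (-((α + 1 : ℕ) : ℤ))) ((p : ℝ) ^ (-(α : ℤ)))) := by
  set shell : ℕ → Set X := fun α =>
    N ⁻¹' Ioc ((p : ℝ) ^ (-((α + 1 : ℕ) : ℤ))) ((p : ℝ) ^ (-(α : ℤ)))
  set F : ℕ → X → ℝ := fun α => (shell α).indicator fun _ => (p : ℝ) ^ (-(α : ℝ) * s)
  have hshell : ∀ α, MeasurableSet (shell α) := fun α => hN measurableSet_Ioc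
  have hF : ∀ α, ∫ x, F α x ∂μ = (p : ℝ) ^ (-(α : ℝ) * s) * μ.real (shell α) := fun α => by
    rw [integral_indicator_const _ (hshell α), smul_eq_mul, mul_comm]
  have hF_norm : ∀ α, ∫ x, ‖F α x‖ ∂μ = ∫ x, F α x ∂μ := fun α =>
    integral_congr_ae (ae_of_all _ fun x => Real.norm_of_nonneg (indicator_nonneg
      (fun _ _ => by positivity) x))
  have hF_sum : ∀ x, N x ^ s = ∑' α, F α x := fun x => by
    obtain ⟨z, hz⟩ := hN_norm x
    rw [← hz, norm_rpow_eq_tsum_indicator z hs, hz]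
    rfl
  have hp : (1 : ℝ) < p := by exact_mod_cast (Fact.out : p.Prime).one_lt
  calc ∫ x, N x ^ s ∂μ = ∫ x, ∑' α, F α x ∂μ := integral_congr_ae (ae_of_all _ hF_sum)
    _ = ∑' α, ∫ x, F α x ∂μ := by
      refine (integral_tsum_of_summable_integral_norm
        (fun α => (integrable_const _).indicator (hshell α)) ?_).symm
      simp only [hF_norm, hF]
      exact summable_rpow_neg_mul_measureReal μ shell hp hs
    _ = _ := tsum_congr hF

end PadicInt

theorem stmt_11_general (p : ℕ) [Fact p.Prime] (n m : ℕ)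
    (f : Fin m → MvPolynomial (Fin n) ℤ_[p])
    [MeasurableSpace ℤ_[p]] [BorelSpace ℤ_[p]]
    (μ : Measure (Fin n → ℤ_[p])) [μ.IsAddLeftInvariant]
    (hμ : μ Set.univ = 1)
    (B : ℕ → ℕ)
    (hB : ∀ α : ℕ, B α = Nat.card {y : Fin n → ZMod (p ^ α) //
      ∀ j, MvPolynomial.eval y (MvPolynomial.map (PadicInt.toZModPow α) (f j)) = 0})
    (s : ℝ) (hs : 0 < s) :
    Summable (fun α : ℕ => (p : ℝ) ^ (-(α : ℝ) * s) *
        ((B α : ℝ) * (p : ℝ) ^ (-((α * n : ℕ) : ℤ))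
          - (B (α + 1) : ℝ) * (p : ℝ) ^ (-(((α + 1) * n : ℕ) : ℤ)))) ∧
    ∫ x, (⨆ j, ‖MvPolynomial.eval x (f j)‖) ^ s ∂μ
      = ∑' α : ℕ, (p : ℝ) ^ (-(α : ℝ) * s) *
          ((B α : ℝ) * (p : ℝ) ^ (-((α * n : ℕ) : ℤ))
            - (B (α + 1) : ℝ) * (p : ℝ) ^ (-(((α + 1) * n : ℕ) : ℤ))) := by
  have : IsProbabilityMeasure μ := ⟨hμ⟩
  have hp : (1 : ℝ) < p := by exact_mod_cast (Fact.out : p.Prime).one_lt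
  set N : (Fin n → ℤ_[p]) → ℝ := fun x => ⨆ j, ‖MvPolynomial.eval x (f j)‖
  have hN : Measurable N :=
    Measurable.iSup fun j => (MvPolynomial.continuous_eval (f j)).norm.measurable
  have hsub : ∀ α : ℕ, μ.real (N ⁻¹' Iic ((p : ℝ) ^ (-(α : ℤ))))
      = B α * (p : ℝ) ^ (-((α * n : ℕ) : ℤ)) := fun α => by
    have h := PadicInt.measureReal_setOf_iSup_norm_eval_le μ f α
    rw [Fintype.card_fin, ← hB] at h
    exact h
  have hshell : ∀ α : ℕ,
      μ.real (N ⁻¹' Ioc ((p : ℝ) ^ (-((α + 1 : ℕ) : ℤ))) ((p : ℝ) ^ (-(α : ℤ))))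
        = B α * (p : ℝ) ^ (-((α * n : ℕ) : ℤ))
          - B (α + 1) * (p : ℝ) ^ (-(((α + 1) * n : ℕ) : ℤ)) := fun α => by
    rw [measureReal_preimage_Ioc μ hN (zpow_le_zpow_right₀ hp.le (by omega)), hsub, hsub]
  simp only [← hshell]
  exact ⟨summable_rpow_neg_mul_measureReal μ _ hp hs,
    PadicInt.integral_rpow_eq_tsum_mul_measureReal μ hN (fun x => exists_norm_eq_iSup_norm _) hs⟩

theorem stmt_11 (p : ℕ) [Fact p.Prime] (n m : ℕ) (hn : 1 ≤ n) (hm : 1 ≤ m)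
    (f : Fin m → MvPolynomial (Fin n) ℤ_[p])
    [MeasurableSpace ℤ_[p]] [BorelSpace ℤ_[p]]
    (μ : Measure (Fin n → ℤ_[p])) [μ.IsAddLeftInvariant]
    (hμ : μ Set.univ = 1)
    (B : ℕ → ℕ)
    (hB : ∀ α : ℕ, B α = Nat.card {y : Fin n → ZMod (p ^ α) //
      ∀ j, MvPolynomial.eval y (MvPolynomial.map (PadicInt.toZModPow α) (f j)) = 0})
    (s : ℝ) (hs : 0 < s) :
    Summable (fun α : ℕ => (p : ℝ) ^ (-(α : ℝ) * s) *
        ((B α : ℝ) * (p : ℝ) ^ (-((α * n : ℕ) : ℤ))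
          - (B (α + 1) : ℝ) * (p : ℝ) ^ (-(((α + 1) * n : ℕ) : ℤ)))) ∧
    ∫ x, (⨆ j, ‖MvPolynomial.eval x (f j)‖) ^ s ∂μ
      = ∑' α : ℕ, (p : ℝ) ^ (-(α : ℝ) * s) *
          ((B α : ℝ) * (p : ℝ) ^ (-((α * n : ℕ) : ℤ))
            - (B (α + 1) : ℝ) * (p : ℝ) ^ (-(((α + 1) * n : ℕ) : ℤ))) :=
  stmt_11_general p n m f μ hμ B hB s hs
end

section
/- Let p be a prime and n ≥ 1 an integer, and let μ be the Haar measure on ℤ_p^n × ℤ_p^n normalized to total mass 1. Then for every real number s > 0, ∫_{ℤ_p^n × ℤ_p^n} ‖ Σ_{i=1}^n x_i y_i ‖_p^s dμ(x,y) = (p−1)(p^n−1)p^{2s} / ((p^{s+1}−1)(p^{s+n}−1)), where p^{2s}, p^{s+1}, p^{s+n} denote real powers of p. -/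
/-!
Left-invariant probability measures on a compact group are unique, so `μ` is the product `ν ⊗ ν`
of the Haar probability measures on `ℤ_pⁿ`. For fixed `x ≠ 0` pick `i₀` with `‖x‖ = ‖x i₀‖`;
then `x = x i₀ • u` with `u i₀ = 1`, so `y ↦ u ⬝ᵥ y` is a continuous surjective homomorphism onto
`ℤ_p` and pushes `ν` to Haar measure on `ℤ_p`. Hence the inner integral is
`‖x‖ ^ s · ∫ ‖t‖ ^ s dt`. Both remaining integrals are radial: the norm only takes the values
`p⁻¹ ^ k` besides `0`, and the ball of radius `p⁻¹ ^ k` in `ℤ_pⁿ` is the kernel of reduction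
mod `p ^ k`, of measure `p ^ (-n k)`. Summing over spheres gives a geometric series, and
`∫ ‖x‖ ^ s dν = (1 - p⁻ⁿ) / (1 - p ^ (-s - n))`.
-/

open MeasureTheory Metric Set
open scoped ENNReal

namespace MeasureTheory.Measure

variable {H : Type*} [AddGroup H] [TopologicalSpace H] [IsTopologicalAddGroup H]
  [CompactSpace H] [MeasurableSpace H] [BorelSpace H]

lemma eq_of_isAddLeftInvariant_of_isProbabilityMeasure (μ ν : Measure H)
    [μ.IsAddLeftInvariant] [ν.IsAddLeftInvariant] [IsProbabilityMeasure μ]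
    [IsProbabilityMeasure ν] : μ = ν := by
  have (ρ : Measure H) [ρ.IsAddLeftInvariant] [IsProbabilityMeasure ρ] : ρ.IsAddHaarMeasure :=
    have : ρ.IsOpenPosMeasure :=
      isOpenPosMeasure_of_addLeftInvariant_of_compact univ isCompact_univ (by simp)
    ⟨⟩
  exact isAddHaarMeasure_eq_of_isProbabilityMeasure μ ν

lemma map_addMonoidHom_eq_of_surjective {G : Type*} [AddGroup G] [TopologicalSpace G]
    [MeasurableSpace G] [OpensMeasurableSpace G] [MeasurableAdd G]
    (μ : Measure G) [μ.IsAddLeftInvariant] [IsProbabilityMeasure μ]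
    (ν : Measure H) [ν.IsAddLeftInvariant] [IsProbabilityMeasure ν]
    (φ : G →+ H) (hφ : Continuous φ) (hsurj : Function.Surjective φ) : μ.map φ = ν :=
  have : (μ.map φ).IsAddLeftInvariant :=
    isAddLeftInvariant_map φ.toAddHom hφ.measurable hsurj
  have : IsProbabilityMeasure (μ.map φ) := isProbabilityMeasure_map hφ.aemeasurable
  eq_of_isAddLeftInvariant_of_isProbabilityMeasure _ _

end MeasureTheory.Measure

lemma AddSubgroup.measure_eq_inv_index {G : Type*} [AddGroup G] [MeasurableSpace G]
    [MeasurableAdd G] (H : AddSubgroup G) [H.FiniteIndex] (hH : MeasurableSet (H : Set G))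
    (μ : Measure G) [μ.IsAddLeftInvariant] [IsProbabilityMeasure μ] :
    μ H = (H.index : ℝ≥0∞)⁻¹ := by
  have := H.index_mul_measure hH μ
  rw [measure_univ] at this
  exact ENNReal.eq_inv_of_mul_eq_one_left (by rw [mul_comm, this])

lemma Pi.exists_ne_zero_norm_eq_norm_apply {ι E : Type*} [Fintype ι] [NormedAddGroup E]
    {x : ι → E} (hx : x ≠ 0) : ∃ i, x i ≠ 0 ∧ ‖x‖ = ‖x i‖ := by
  have := (Function.ne_iff.mp hx).nonempty
  obtain ⟨i, -, hi⟩ := Finset.exists_mem_eq_sup Finset.univ Finset.univ_nonempty (‖x ·‖₊)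
  have hxi : ‖x‖ = ‖x i‖ := by rw [Pi.norm_def, hi, coe_nnnorm]
  exact ⟨i, norm_ne_zero_iff.mp (hxi ▸ norm_ne_zero_iff.mpr hx), hxi⟩

lemma one_sub_inv_pow_div_eq {P : ℝ} (hP : 0 < P) (s : ℝ) (m : ℕ) :
    (1 - P⁻¹ ^ m) / (1 - P⁻¹ ^ s * P⁻¹ ^ m) = (P ^ m - 1) * P ^ s / (P ^ (s + m) - 1) := by
  have : 0 < P ^ s := Real.rpow_pos_of_pos hP s
  have : 0 < P ^ m := pow_pos hP m
  rw [Real.inv_rpow hP.le, inv_pow, Real.rpow_add hP, Real.rpow_natCast]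
  field_simp

section DiscreteNorm

variable {E : Type*} [NormedAddCommGroup E] {r : ℝ}

lemma sphere_zero_pow_eq_closedBall_diff (hr0 : 0 < r) (hr1 : r < 1)
    (hnorm : ∀ x : E, x ≠ 0 → ∃ k : ℕ, ‖x‖ = r ^ k) (k : ℕ) :
    sphere (0 : E) (r ^ k) = closedBall 0 (r ^ k) \ closedBall 0 (r ^ (k + 1)) := by
  ext x
  simp only [mem_sphere_zero_iff_norm, mem_sdiff, mem_closedBall_zero_iff, not_le]
  constructor
  · intro h
    exact ⟨h.le, h ▸ pow_lt_pow_right_of_lt_one₀ hr0 hr1 k.lt_succ_self⟩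
  · rintro ⟨hle, hlt⟩
    have hx : x ≠ 0 := by
      rintro rfl
      exact (norm_zero (E := E) ▸ hlt).not_ge (pow_pos hr0 _).le
    obtain ⟨m, hm⟩ := hnorm x hx
    rw [hm, pow_le_pow_iff_right_of_lt_one₀ hr0 hr1] at hle
    rw [hm, pow_lt_pow_iff_right_of_lt_one₀ hr0 hr1] at hlt
    rw [hm, Nat.le_antisymm hle (Nat.lt_succ_iff.mp hlt)]

lemma ofReal_norm_rpow_eq_tsum_indicator_sphere (hr0 : 0 < r) (hr1 : r < 1)
    (hnorm : ∀ x : E, x ≠ 0 → ∃ k : ℕ, ‖x‖ = r ^ k) {s : ℝ} (hs : 0 < s) (x : E) :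
    ENNReal.ofReal (‖x‖ ^ s)
      = ∑' k : ℕ, (sphere (0 : E) (r ^ k)).indicator (fun _ ↦ ENNReal.ofReal (r ^ s) ^ k) x := by
  obtain rfl | hx := eq_or_ne x 0
  · rw [norm_zero, Real.zero_rpow hs.ne', ENNReal.ofReal_zero, eq_comm, ENNReal.tsum_eq_zero]
    exact fun k ↦ indicator_of_notMem (by simpa using (pow_pos hr0 k).ne) _
  obtain ⟨m, hm⟩ := hnorm x hx
  rw [tsum_eq_single m]
  · rw [indicator_of_mem (by simpa using hm), hm, ← Real.rpow_pow_comm hr0.le,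
      ENNReal.ofReal_pow (Real.rpow_nonneg hr0.le s)]
  · intro k hk
    refine indicator_of_notMem (fun hxk ↦ hk ?_) _
    rw [mem_sphere_zero_iff_norm, hm] at hxk
    exact (pow_right_injective₀ hr0 hr1.ne hxk).symm

lemma lintegral_norm_rpow_eq_of_measure_closedBall [MeasurableSpace E] [OpensMeasurableSpace E]
    (hr0 : 0 < r) (hr1 : r < 1) (hnorm : ∀ x : E, x ≠ 0 → ∃ k : ℕ, ‖x‖ = r ^ k)
    (ν : Measure E) {a : ℝ} (ha0 : 0 ≤ a) (ha1 : a ≤ 1)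
    (hball : ∀ k : ℕ, ν (closedBall 0 (r ^ k)) = ENNReal.ofReal (a ^ k)) {s : ℝ} (hs : 0 < s) :
    ∫⁻ x, ENNReal.ofReal (‖x‖ ^ s) ∂ν = ENNReal.ofReal ((1 - a) / (1 - r ^ s * a)) := by
  have hrs0 : 0 ≤ r ^ s := Real.rpow_nonneg hr0.le s
  have hrs1 : r ^ s * a < 1 :=
    (mul_le_of_le_one_right hrs0 ha1).trans_lt (Real.rpow_lt_one hr0.le hr1 hs)
  have hsphere (k : ℕ) : ν (sphere 0 (r ^ k)) = ENNReal.ofReal (a ^ k - a ^ (k + 1)) := by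
    rw [sphere_zero_pow_eq_closedBall_diff hr0 hr1 hnorm, measure_sdiff
      (closedBall_subset_closedBall (pow_le_pow_of_le_one hr0.le hr1.le k.le_succ))
      measurableSet_closedBall.nullMeasurableSet (by simp [hball]), hball, hball,
      ENNReal.ofReal_sub _ (by positivity)]
  have hterm (k : ℕ) : ENNReal.ofReal (r ^ s) ^ k * ν (sphere 0 (r ^ k))
      = ENNReal.ofReal ((r ^ s * a) ^ k * (1 - a)) := by
    rw [hsphere, ← ENNReal.ofReal_pow hrs0, ← ENNReal.ofReal_mul (by positivity)]
    congr 1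
    ring
  calc ∫⁻ x, ENNReal.ofReal (‖x‖ ^ s) ∂ν
      = ∑' k : ℕ, ENNReal.ofReal (r ^ s) ^ k * ν (sphere 0 (r ^ k)) := by
        simp_rw [ofReal_norm_rpow_eq_tsum_indicator_sphere hr0 hr1 hnorm hs]
        rw [lintegral_tsum fun k ↦
          (measurable_const.indicator isClosed_sphere.measurableSet).aemeasurable]
        simp_rw [lintegral_indicator_const isClosed_sphere.measurableSet]
    _ = ENNReal.ofReal (∑' k : ℕ, (r ^ s * a) ^ k * (1 - a)) := by
        simp_rw [hterm]
        exact (ENNReal.ofReal_tsum_of_nonneg (fun k ↦ by have := sub_nonneg.2 ha1; positivity)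
          ((summable_geometric_of_lt_one (by positivity) hrs1).mul_right _)).symm
    _ = ENNReal.ofReal ((1 - a) / (1 - r ^ s * a)) := by
        rw [tsum_mul_right, tsum_geometric_of_lt_one (by positivity) hrs1, inv_mul_eq_div]

lemma lintegral_norm_rpow_eq_of_measure_closedBall_inv_pow [MeasurableSpace E]
    [OpensMeasurableSpace E] {P : ℝ} (hP : 1 < P)
    (hnorm : ∀ x : E, x ≠ 0 → ∃ k : ℕ, ‖x‖ = P⁻¹ ^ k) (ν : Measure E) (m : ℕ)
    (hball : ∀ k : ℕ, ν (closedBall 0 (P⁻¹ ^ k)) = ENNReal.ofReal ((P⁻¹ ^ m) ^ k))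
    {s : ℝ} (hs : 0 < s) :
    ∫⁻ x, ENNReal.ofReal (‖x‖ ^ s) ∂ν
      = ENNReal.ofReal ((P ^ m - 1) * P ^ s / (P ^ (s + m) - 1)) := by
  have hr0 : 0 < P⁻¹ := inv_pos.mpr (zero_lt_one.trans hP)
  have hr1 : P⁻¹ < 1 := inv_lt_one_of_one_lt₀ hP
  rw [lintegral_norm_rpow_eq_of_measure_closedBall hr0 hr1 hnorm ν (by positivity)
    (pow_le_one₀ hr0.le hr1.le) hball hs, one_sub_inv_pow_div_eq (zero_lt_one.trans hP)]

end DiscreteNorm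

namespace PadicInt

variable {p : ℕ} [Fact p.Prime] {ι : Type*} [Fintype ι]

lemma norm_eq_inv_pow_valuation {x : ℤ_[p]} (hx : x ≠ 0) : ‖x‖ = (p : ℝ)⁻¹ ^ x.valuation := by
  rw [norm_eq_zpow_neg_valuation hx, zpow_neg, zpow_natCast, inv_pow]

lemma exists_norm_pi_eq_inv_pow {x : ι → ℤ_[p]} (hx : x ≠ 0) :
    ∃ k : ℕ, ‖x‖ = (p : ℝ)⁻¹ ^ k := by
  obtain ⟨i₀, hxi₀, hi₀⟩ := Pi.exists_ne_zero_norm_eq_norm_apply hx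
  exact ⟨_, hi₀.trans (norm_eq_inv_pow_valuation hxi₀)⟩

lemma dvd_of_norm_le {a b : ℤ_[p]} (hb : b ≠ 0) (h : ‖a‖ ≤ ‖b‖) : b ∣ a := by
  have hb' : (b : ℚ_[p]) ≠ 0 := coe_ne_zero.mpr hb
  refine ⟨⟨a / b, ?_⟩, Subtype.ext ?_⟩
  · rw [norm_div, div_le_one (norm_pos_iff.mpr hb')]
    exact h
  · exact (mul_div_cancel₀ _ hb').symm

lemma closedBall_zero_eq_ker_toZModPow (k : ℕ) :
    closedBall (0 : ℤ_[p]) ((p : ℝ)⁻¹ ^ k)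
      = (toZModPow k : ℤ_[p] →+* ZMod (p ^ k)).toAddMonoidHom.ker := by
  ext x
  rw [mem_closedBall_zero_iff, inv_pow, ← zpow_natCast, ← zpow_neg, norm_le_pow_iff_mem_span_pow,
    ← ker_toZModPow]
  rfl

lemma index_ker_toZModPow (k : ℕ) :
    (toZModPow k : ℤ_[p] →+* ZMod (p ^ k)).toAddMonoidHom.ker.index = p ^ k := by
  have hsurj : Function.Surjective (toZModPow k : ℤ_[p] →+* ZMod (p ^ k)) :=
    fun c ↦ ⟨c.val, by simp⟩
  rw [AddSubgroup.index_ker, AddMonoidHom.range_eq_top.mpr hsurj, AddSubgroup.card_top,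
    Nat.card_zmod]

variable [MeasurableSpace ℤ_[p]] [BorelSpace ℤ_[p]]
  (η : Measure ℤ_[p]) [η.IsAddLeftInvariant] [IsProbabilityMeasure η] {s : ℝ}

lemma measure_closedBall_zero (k : ℕ) :
    η (closedBall 0 ((p : ℝ)⁻¹ ^ k)) = ENNReal.ofReal ((p : ℝ)⁻¹ ^ k) := by
  have hclosed := closedBall_zero_eq_ker_toZModPow (p := p) k
  have : AddSubgroup.FiniteIndex (toZModPow k : ℤ_[p] →+* ZMod (p ^ k)).toAddMonoidHom.ker :=
    ⟨by rw [index_ker_toZModPow]; exact pow_ne_zero _ (Fact.out : p.Prime).ne_zero⟩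
  rw [hclosed, AddSubgroup.measure_eq_inv_index _ (hclosed ▸ isClosed_closedBall.measurableSet),
    index_ker_toZModPow, inv_pow,
    ENNReal.ofReal_inv_of_pos (pow_pos (Nat.cast_pos.mpr (Fact.out : p.Prime).pos) k)]
  simp

lemma measure_pi_closedBall_zero (k : ℕ) :
    Measure.pi (fun _ : ι ↦ η) (closedBall 0 ((p : ℝ)⁻¹ ^ k))
      = ENNReal.ofReal (((p : ℝ)⁻¹ ^ Fintype.card ι) ^ k) := by
  rw [closedBall_pi _ (by positivity), Measure.pi_pi]
  simp only [Pi.zero_apply, measure_closedBall_zero, Finset.prod_const, Finset.card_univ]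
  rw [← ENNReal.ofReal_pow (by positivity), ← pow_mul, ← pow_mul, mul_comm]

lemma lintegral_norm_rpow (hs : 0 < s) :
    ∫⁻ t, ENNReal.ofReal (‖t‖ ^ s) ∂η
      = ENNReal.ofReal (((p : ℝ) - 1) * (p : ℝ) ^ s / ((p : ℝ) ^ (s + 1) - 1)) := by
  simpa using lintegral_norm_rpow_eq_of_measure_closedBall_inv_pow
    (mod_cast (Fact.out : p.Prime).one_lt) (fun _ hx ↦ ⟨_, norm_eq_inv_pow_valuation hx⟩) η 1
    (by simpa using measure_closedBall_zero η) hs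

lemma lintegral_pi_norm_rpow (hs : 0 < s) :
    ∫⁻ x, ENNReal.ofReal (‖x‖ ^ s) ∂(Measure.pi fun _ : ι ↦ η)
      = ENNReal.ofReal (((p : ℝ) ^ Fintype.card ι - 1) * (p : ℝ) ^ s
          / ((p : ℝ) ^ (s + Fintype.card ι) - 1)) :=
  lintegral_norm_rpow_eq_of_measure_closedBall_inv_pow (mod_cast (Fact.out : p.Prime).one_lt)
    (fun _ ↦ exists_norm_pi_eq_inv_pow) _ _ (measure_pi_closedBall_zero η) hs

lemma lintegral_norm_dotProduct_rpow (ν : Measure (ι → ℤ_[p])) [ν.IsAddLeftInvariant]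
    [IsProbabilityMeasure ν] (x : ι → ℤ_[p]) :
    ∫⁻ y, ENNReal.ofReal (‖x ⬝ᵥ y‖ ^ s) ∂ν
      = ENNReal.ofReal (‖x‖ ^ s) * ∫⁻ t, ENNReal.ofReal (‖t‖ ^ s) ∂η := by
  classical
  obtain rfl | hx := eq_or_ne x 0
  · -- `Real.rpow` has `0 ^ 0 = 1`
    obtain rfl | hs := eq_or_ne s 0
    · simp
    · simp [Real.zero_rpow hs]
  obtain ⟨i₀, hxi₀, hi₀⟩ := Pi.exists_ne_zero_norm_eq_norm_apply hx
  choose u hu using fun i ↦ dvd_of_norm_le hxi₀ (hi₀ ▸ norm_le_pi_norm x i)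
  have hu₀ : u i₀ = 1 := mul_left_cancel₀ hxi₀ ((hu i₀).symm.trans (mul_one _).symm)
  let φ : (ι → ℤ_[p]) →+ ℤ_[p] := AddMonoidHom.mk' (u ⬝ᵥ ·) (dotProduct_add u)
  have hφ : Continuous φ := continuous_const.dotProduct continuous_id
  have hmap : ν.map φ = η := Measure.map_addMonoidHom_eq_of_surjective ν η φ hφ
    fun t ↦ ⟨Pi.single i₀ t, by simp [φ, hu₀]⟩
  have hdot (y : ι → ℤ_[p]) : x ⬝ᵥ y = x i₀ * φ y := by
    conv_lhs => rw [show x = x i₀ • u from funext hu]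
    exact smul_dotProduct _ _ _
  calc ∫⁻ y, ENNReal.ofReal (‖x ⬝ᵥ y‖ ^ s) ∂ν
      = ∫⁻ y, ENNReal.ofReal (‖x‖ ^ s) * ENNReal.ofReal (‖φ y‖ ^ s) ∂ν := by
        refine lintegral_congr fun y ↦ ?_
        rw [hdot, norm_mul, ← hi₀, Real.mul_rpow (norm_nonneg _) (norm_nonneg _),
          ENNReal.ofReal_mul (by positivity)]
    _ = ENNReal.ofReal (‖x‖ ^ s) * ∫⁻ t, ENNReal.ofReal (‖t‖ ^ s) ∂η := by
        rw [lintegral_const_mul _ (by fun_prop), ← hmap,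
          lintegral_map (by fun_prop) hφ.measurable]

end PadicInt

theorem stmt_12_general (p : ℕ) [Fact p.Prime] (n : ℕ)
    [MeasurableSpace ℤ_[p]] [BorelSpace ℤ_[p]]
    (μ : Measure ((Fin n → ℤ_[p]) × (Fin n → ℤ_[p]))) [μ.IsAddLeftInvariant]
    (hμ : μ Set.univ = 1)
    (s : ℝ) (hs : 0 < s) :
    ∫ v, ‖∑ i, v.1 i * v.2 i‖ ^ s ∂μ
      = ((p : ℝ) - 1) * ((p : ℝ) ^ n - 1) * (p : ℝ) ^ (2 * s)
        / (((p : ℝ) ^ (s + 1) - 1) * ((p : ℝ) ^ (s + (n : ℝ)) - 1)) := by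
  have : IsProbabilityMeasure μ := ⟨hμ⟩
  let η : Measure ℤ_[p] := Measure.addHaarMeasure ⊤
  have : IsProbabilityMeasure η := ⟨Measure.addHaarMeasure_self⟩
  let ν : Measure (Fin n → ℤ_[p]) := Measure.pi fun _ ↦ η
  have hμν : μ = ν.prod ν := Measure.eq_of_isAddLeftInvariant_of_isProbabilityMeasure _ _
  change ∫ v, ‖v.1 ⬝ᵥ v.2‖ ^ s ∂μ = _
  rw [integral_eq_lintegral_of_nonneg_ae (ae_of_all _ fun _ ↦ by positivity)
      (by fun_prop (disch := exact hs.le)), hμν, lintegral_prod _ (by fun_prop)]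
  simp_rw [PadicInt.lintegral_norm_dotProduct_rpow η ν]
  have hp : (1 : ℝ) ≤ p := mod_cast (Fact.out : p.Prime).one_lt.le
  rw [lintegral_mul_const _ (by fun_prop), PadicInt.lintegral_pi_norm_rpow η hs,
    PadicInt.lintegral_norm_rpow η hs, ENNReal.toReal_mul, ENNReal.toReal_ofReal,
    ENNReal.toReal_ofReal, Fintype.card_fin, two_mul, Real.rpow_add (by positivity) s s,
    div_mul_div_comm]
  · congr 1 <;> ring
  all_goals
    refine div_nonneg (mul_nonneg ?_ (by positivity))
      (sub_nonneg.2 (Real.one_le_rpow hp (by positivity)))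
  · linarith
  · exact sub_nonneg.2 (one_le_pow₀ hp)

theorem stmt_12 (p : ℕ) [Fact p.Prime] (n : ℕ) (hn : 1 ≤ n)
    [MeasurableSpace ℤ_[p]] [BorelSpace ℤ_[p]]
    (μ : Measure ((Fin n → ℤ_[p]) × (Fin n → ℤ_[p]))) [μ.IsAddLeftInvariant]
    (hμ : μ Set.univ = 1)
    (s : ℝ) (hs : 0 < s) :
    ∫ v, ‖∑ i, v.1 i * v.2 i‖ ^ s ∂μ
      = ((p : ℝ) - 1) * ((p : ℝ) ^ n - 1) * (p : ℝ) ^ (2 * s)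
        / (((p : ℝ) ^ (s + 1) - 1) * ((p : ℝ) ^ (s + (n : ℝ)) - 1)) :=
  stmt_12_general p n μ hμ s hs
end

section
/- Let Γ = (I,E,s,t) be a quiver with finite vertex set I and finite edge set E, p a prime, α ≥ 1 an integer, and R = ℤ/p^αℤ. Let x : E → R be a 1-dimensional representation of Γ over R. For 1 ≤ k ≤ α, let c_k denote the number of equivalence classes of the equivalence relation on I generated by the pairs {(s(e), t(e)) : e ∈ E, x(e) ∉ p^k R}. Then the number of automorphisms of x, i.e. the cardinality of {g : I → R^× : (g(t(e)) − g(s(e))) · x(e) = 0 for all e ∈ E}, equals (p−1)^{c_α} · p^{Σ_{k=1}^{α−1} c_k}. -/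
/-!
Write `g : I → ZMod (p ^ (γ + 1))` digitwise as `g = b + p w` with `b : I → ZMod p` and
`w : I → ZMod (p ^ γ)`. The equation `(g (t e) - g (s e)) * x e = 0` then says exactly that `b` is
constant along the edges with `x e ≠ 0` and that `w` solves the same equation over `ZMod (p ^ γ)`
for `x` reduced mod `p ^ γ`; moreover `g` takes unit values iff `b` vanishes nowhere. So the
solutions contribute a factor `p ^ c_(γ+1)` (resp. `(p - 1) ^ c_(γ+1)` for units) times the count
one level down, and induction on `γ` gives the formula.
-/

namespace ZMod

theorem dvd_val_iff_eq_zero {n : ℕ} [NeZero n] (a : ZMod n) : n ∣ a.val ↔ a = 0 := by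
  rw [← ZMod.natCast_eq_zero_iff, ZMod.natCast_zmod_val]

theorem exists_eq_natCast_mul_iff_dvd_val {n d : ℕ} [NeZero n] (hd : d ∣ n) (a : ZMod n) :
    (∃ z : ZMod n, a = d * z) ↔ d ∣ a.val := by
  constructor
  · rintro ⟨z, rfl⟩
    rw [← ZMod.natCast_zmod_val z, ← Nat.cast_mul, ZMod.val_natCast]
    exact (Nat.dvd_mod_iff hd).mpr (dvd_mul_right d _)
  · rintro ⟨w, hw⟩
    exact ⟨w, by rw [← Nat.cast_mul, ← hw, ZMod.natCast_zmod_val]⟩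

end ZMod

def compatibleFunEquiv {α β : Type*} (r : α → α → Prop) (P : β → Prop) :
    {f : α → β // (∀ a b, r a b → f a = f b) ∧ ∀ a, P (f a)} ≃ (Quot r → {b // P b}) where
  toFun f := Quot.lift (fun a => ⟨f.1 a, f.2.2 a⟩) fun a b h => Subtype.ext (f.2.1 a b h)
  invFun φ := ⟨fun a => (φ (Quot.mk r a)).1,
    fun _ _ h => congrArg Subtype.val (congrArg φ (Quot.sound h)), fun _ => (φ _).2⟩
  left_inv _ := rfl
  right_inv _ := funext <| Quot.ind fun _ => rfl

theorem card_compatible_fun {α β : Type*} [Finite α] (r : α → α → Prop) (P : β → Prop) :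
    Nat.card {f : α → β // (∀ a b, r a b → f a = f b) ∧ ∀ a, P (f a)} =
      Nat.card {b // P b} ^ Nat.card (Quot r) := by
  rw [Nat.card_congr (compatibleFunEquiv r P), Nat.card_fun]

noncomputable def unitsFunEquiv {α M : Type*} [Monoid M] (C : (α → M) → Prop) :
    {g : α → Mˣ // C fun a => g a} ≃ {g : α → M // C g ∧ ∀ a, IsUnit (g a)} where
  toFun g := ⟨fun a => g.1 a, g.2, fun a => (g.1 a).isUnit⟩
  invFun g := ⟨fun a => (g.2.2 a).unit, g.2.1⟩
  left_inv _ := by ext; simp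
  right_inv _ := by ext; simp

section Quiver

variable {I E : Type*} (s t : E → I)

/-- Its equivalence classes are the connected components of the graph `(I, {e | S e})`. -/
def edgeRel (S : E → Prop) (i j : I) : Prop :=
  ∃ e, S e ∧ s e = i ∧ t e = j

theorem forall_edgeRel_imp_iff {β : Type*} (S : E → Prop) (f : I → β) :
    (∀ i j, edgeRel s t S i j → f i = f j) ↔ ∀ e, S e → f (s e) = f (t e) :=
  ⟨fun h e he => h _ _ ⟨e, he, rfl, rfl⟩, by rintro h _ _ ⟨e, he, rfl, rfl⟩; exact h e he⟩

/-- Endomorphisms of the 1-dimensional representation `x`: over a commutative ring the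
intertwining condition `g (t e) * x e = x e * g (s e)` reads `(g (t e) - g (s e)) * x e = 0`. -/
def reprEnd {R : Type*} [Ring R] (x : E → R) : Set (I → R) :=
  {g | ∀ e, (g (t e) - g (s e)) * x e = 0}

end Quiver

namespace ZModPrimePow

variable {p γ : ℕ}

variable (p γ) in
def residue : ZMod (p ^ (γ + 1)) →+* ZMod p :=
  ZMod.castHom (dvd_pow_self p γ.succ_ne_zero) _

variable (p γ) in
def reduce : ZMod (p ^ (γ + 1)) →+* ZMod (p ^ γ) :=
  ZMod.castHom (pow_dvd_pow p γ.le_succ) _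

variable (p γ) in
def mulP : ZMod (p ^ γ) →+ ZMod (p ^ (γ + 1)) :=
  ZMod.lift (p ^ γ) ⟨(AddMonoidHom.mulLeft (p : ZMod (p ^ (γ + 1)))).comp (Int.castAddHom _), by
    simp only [AddMonoidHom.coe_comp, Function.comp_apply, Int.coe_castAddHom, Int.cast_natCast,
      AddMonoidHom.coe_mulLeft]
    rw [← Nat.cast_mul, ← pow_succ', ZMod.natCast_self]⟩

theorem mulP_natCast (m : ℕ) : mulP p γ m = p * m := by
  rw [← Int.cast_natCast, mulP, ZMod.lift_coe]
  simp

variable [Fact p.Prime]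

theorem mulP_injective : Function.Injective (mulP p γ) := by
  refine (injective_iff_map_eq_zero _).mpr fun w hw => ?_
  rw [← ZMod.natCast_zmod_val w, mulP_natCast, ← Nat.cast_mul, ZMod.natCast_eq_zero_iff,
    pow_succ', Nat.mul_dvd_mul_iff_left (Fact.out : p.Prime).pos] at hw
  rwa [← ZMod.natCast_zmod_val w, ZMod.natCast_eq_zero_iff]

theorem mulP_mul (w : ZMod (p ^ γ)) (c : ZMod (p ^ (γ + 1))) :
    mulP p γ w * c = mulP p γ (w * reduce p γ c) := by
  obtain ⟨m, rfl⟩ := ZMod.natCast_zmod_surjective w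
  obtain ⟨n, rfl⟩ := ZMod.natCast_zmod_surjective c
  rw [map_natCast (reduce p γ), ← Nat.cast_mul, mulP_natCast, mulP_natCast]
  push_cast
  ring

theorem residue_natCast_val (b : ZMod p) : residue p γ (b.val : ZMod (p ^ (γ + 1))) = b := by
  rw [map_natCast, ZMod.natCast_zmod_val]

theorem residue_mulP (w : ZMod (p ^ γ)) : residue p γ (mulP p γ w) = 0 := by
  obtain ⟨m, rfl⟩ := ZMod.natCast_zmod_surjective w
  rw [mulP_natCast, map_mul, map_natCast, ZMod.natCast_self, zero_mul]

theorem isUnit_iff_residue_ne_zero (a : ZMod (p ^ (γ + 1))) : IsUnit a ↔ residue p γ a ≠ 0 := by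
  rw [← ZMod.natCast_zmod_val a, map_natCast, ZMod.isUnit_iff_coprime, Ne,
    ZMod.natCast_eq_zero_iff, Nat.coprime_pow_right_iff γ.succ_pos, Nat.coprime_comm,
    (Fact.out : p.Prime).coprime_iff_not_dvd]

theorem residue_eq_zero_of_mul_eq_zero {a c : ZMod (p ^ (γ + 1))} (h : a * c = 0) (hc : c ≠ 0) :
    residue p γ a = 0 := by
  by_contra ha
  exact hc (((isUnit_iff_residue_ne_zero a).mpr ha).mul_right_eq_zero.mp h)

theorem pow_dvd_val_reduce_iff {k : ℕ} (hk : k ≤ γ) (a : ZMod (p ^ (γ + 1))) :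
    p ^ k ∣ (reduce p γ a).val ↔ p ^ k ∣ a.val := by
  rw [← ZMod.natCast_zmod_val a, map_natCast, ZMod.val_natCast, ZMod.natCast_zmod_val]
  exact Nat.dvd_mod_iff (pow_dvd_pow p hk)

variable (p γ) in
def digits (bw : ZMod p × ZMod (p ^ γ)) : ZMod (p ^ (γ + 1)) :=
  (bw.1.val : ZMod (p ^ (γ + 1))) + mulP p γ bw.2

theorem residue_digits (bw : ZMod p × ZMod (p ^ γ)) : residue p γ (digits p γ bw) = bw.1 := by
  rw [digits, map_add, residue_natCast_val, residue_mulP, add_zero]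

theorem digits_bijective : Function.Bijective (digits p γ) := by
  refine Function.Injective.bijective_of_nat_card_le ?_ ?_
  · rintro ⟨b, w⟩ ⟨b', w'⟩ h
    obtain rfl : b = b' := by simpa only [residue_digits] using congrArg (residue p γ) h
    exact Prod.ext rfl (mulP_injective (add_left_cancel h))
  · simp only [Nat.card_prod, Nat.card_zmod, pow_succ', le_refl]

theorem digits_sub_digits_mul_eq_zero_iff (b b' : ZMod p) (w w' : ZMod (p ^ γ))
    (c : ZMod (p ^ (γ + 1))) :
    (digits p γ (b, w) - digits p γ (b', w')) * c = 0 ↔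
      (c ≠ 0 → b = b') ∧ (w - w') * reduce p γ c = 0 := by
  rcases eq_or_ne c 0 with rfl | hc
  · simp
  have same_digit : ∀ w w', (digits p γ (b', w) - digits p γ (b', w')) * c = 0 ↔
      (w - w') * reduce p γ c = 0 := fun w w' => by
    rw [digits, digits, add_sub_add_left_eq_sub, ← map_sub, mulP_mul,
      map_eq_zero_iff _ mulP_injective]
  constructor
  · intro h
    obtain rfl : b = b' := by
      simpa only [map_sub, residue_digits, sub_eq_zero] using residue_eq_zero_of_mul_eq_zero h hc
    exact ⟨fun _ => rfl, (same_digit w w').mp h⟩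
  · rintro ⟨hb, hw⟩
    rw [hb hc]
    exact (same_digit w w').mpr hw

variable {I E : Type*} (s t : E → I)

theorem digits_mem_reprEnd_iff (x : E → ZMod (p ^ (γ + 1))) (b : I → ZMod p)
    (w : I → ZMod (p ^ γ)) :
    (fun i => digits p γ (b i, w i)) ∈ reprEnd s t x ↔
      (∀ e, ¬ p ^ (γ + 1) ∣ (x e).val → b (s e) = b (t e)) ∧
        w ∈ reprEnd s t (reduce p γ ∘ x) := by
  simp only [reprEnd, Set.mem_ofPred_eq, digits_sub_digits_mul_eq_zero_iff, forall_and,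
    ZMod.dvd_val_iff_eq_zero, Function.comp_apply, eq_comm (a := b (s _))]

theorem card_reprEnd_residue [Finite I] (x : E → ZMod (p ^ (γ + 1)))
    (P : ZMod p → Prop) :
    Nat.card {g : I → ZMod (p ^ (γ + 1)) // g ∈ reprEnd s t x ∧ ∀ i, P (residue p γ (g i))} =
      Nat.card {b // P b} ^ Nat.card (Quot (edgeRel s t fun e => ¬ p ^ (γ + 1) ∣ (x e).val)) *
        Nat.card (reprEnd s t (reduce p γ ∘ x)) := by
  let D : (I → ZMod p) × (I → ZMod (p ^ γ)) ≃ (I → ZMod (p ^ (γ + 1))) :=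
    (Equiv.arrowProdEquivProdArrow _ _ _).symm.trans
      (Equiv.piCongrRight fun _ => Equiv.ofBijective _ digits_bijective)
  let C (b : I → ZMod p) : Prop :=
    (∀ i j, edgeRel s t (fun e => ¬ p ^ (γ + 1) ∣ (x e).val) i j → b i = b j) ∧ ∀ i, P (b i)
  have split :=
    Equiv.subtypeEquiv (p := fun bw => C bw.1 ∧ bw.2 ∈ reprEnd s t (reduce p γ ∘ x))
      (q := fun g => g ∈ reprEnd s t x ∧ ∀ i, P (residue p γ (g i))) D fun ⟨b, w⟩ => show _ ↔
        (fun i => digits p γ (b i, w i)) ∈ reprEnd s t x ∧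
          ∀ i, P (residue p γ (digits p γ (b i, w i))) by
    rw [digits_mem_reprEnd_iff, ← forall_edgeRel_imp_iff]
    simp only [C, residue_digits]
    exact and_right_comm
  rw [← Nat.card_congr split, Nat.card_congr Equiv.subtypeProdEquivProd, Nat.card_prod,
    card_compatible_fun]

theorem sum_card_quot_reduce (x : E → ZMod (p ^ (γ + 1))) :
    ∑ k ∈ Finset.Icc 1 γ,
        Nat.card (Quot (edgeRel s t fun e => ¬ p ^ k ∣ (reduce p γ (x e)).val)) =
      ∑ k ∈ Finset.Icc 1 γ, Nat.card (Quot (edgeRel s t fun e => ¬ p ^ k ∣ (x e).val)) :=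
  Finset.sum_congr rfl fun k hk => by simp only [pow_dvd_val_reduce_iff (Finset.mem_Icc.mp hk).2]

variable [Finite I]

theorem card_reprEnd : ∀ (γ : ℕ) (x : E → ZMod (p ^ γ)),
    Nat.card (reprEnd s t x) =
      p ^ ∑ k ∈ Finset.Icc 1 γ, Nat.card (Quot (edgeRel s t fun e => ¬ p ^ k ∣ (x e).val))
  | 0, x => by
    have : Subsingleton (ZMod (p ^ 0)) := by rw [pow_zero]; infer_instance
    refine (Nat.card_eq_one_iff_unique.mpr
      ⟨inferInstance, ⟨⟨0, fun _ => Subsingleton.elim _ _⟩⟩⟩).trans ?_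
    rw [Finset.Icc_eq_empty (by norm_num), Finset.sum_empty, pow_zero]
  | γ + 1, x => by
    have h := card_reprEnd_residue s t x fun _ => True
    simp only [and_true, implies_true] at h
    rw [Nat.card_congr (Equiv.subtypeUnivEquiv fun _ => trivial), Nat.card_zmod,
      card_reprEnd γ] at h
    refine h.trans ?_
    rw [Function.comp_def, sum_card_quot_reduce, ← pow_add, add_comm (Nat.card _),
      Finset.sum_Icc_succ_top (by omega)]

theorem card_reprAut (x : E → ZMod (p ^ (γ + 1))) :
    Nat.card {g : I → (ZMod (p ^ (γ + 1)))ˣ //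
        (fun i => (g i : ZMod (p ^ (γ + 1)))) ∈ reprEnd s t x} =
      (p - 1) ^ Nat.card (Quot (edgeRel s t fun e => ¬ p ^ (γ + 1) ∣ (x e).val)) *
        p ^ ∑ k ∈ Finset.Icc 1 γ, Nat.card (Quot (edgeRel s t fun e => ¬ p ^ k ∣ (x e).val)) := by
  have card_ne_zero : Nat.card {b : ZMod p // b ≠ 0} = p - 1 := by
    rw [← Nat.card_congr unitsEquivNeZero, Nat.card_eq_fintype_card, ZMod.card_units]
  rw [Nat.card_congr (unitsFunEquiv (· ∈ reprEnd s t x)),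
    Nat.card_congr (Equiv.subtypeEquivRight
      (p := fun g : I → ZMod (p ^ (γ + 1)) => g ∈ reprEnd s t x ∧ ∀ i, IsUnit (g i)) fun g =>
      and_congr_right' (forall_congr' fun i => isUnit_iff_residue_ne_zero (g i))),
    card_reprEnd_residue s t x (· ≠ 0), card_ne_zero, card_reprEnd, Function.comp_def,
    sum_card_quot_reduce]

end ZModPrimePow

theorem stmt_14_general {I E : Type*} [Fintype I] (s t : E → I)
    (p : ℕ) (hp : p.Prime) (α : ℕ) (hα : 1 ≤ α)
    (x : E → ZMod (p ^ α))
    (c : ℕ → ℕ)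
    (hc : ∀ k : ℕ, c k = Nat.card (Quot (fun i j : I =>
      ∃ e : E, (¬ ∃ z : ZMod (p ^ α), x e = (p : ZMod (p ^ α)) ^ k * z)
        ∧ s e = i ∧ t e = j))) :
    Nat.card {g : I → (ZMod (p ^ α))ˣ //
        ∀ e : E, ((g (t e) : ZMod (p ^ α)) - (g (s e) : ZMod (p ^ α))) * x e = 0}
      = (p - 1) ^ (c α) * p ^ (∑ k ∈ Finset.Icc 1 (α - 1), c k) := by
  have := Fact.mk hp
  obtain ⟨γ, rfl⟩ : ∃ γ, α = γ + 1 := ⟨α - 1, by omega⟩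
  have hc' : ∀ k ≤ γ + 1, c k = Nat.card (Quot (edgeRel s t fun e => ¬ p ^ k ∣ (x e).val)) :=
    fun k hk => by
      simp only [hc k, ← Nat.cast_pow, ZMod.exists_eq_natCast_mul_iff_dvd_val (pow_dvd_pow p hk)]
      rfl
  rw [Nat.add_sub_cancel, hc' _ le_rfl,
    Finset.sum_congr rfl fun k hk => hc' k ((Finset.mem_Icc.mp hk).2.trans γ.le_succ)]
  exact ZModPrimePow.card_reprAut s t x

theorem stmt_14 {I E : Type*} [Fintype I] [Fintype E] (s t : E → I)
    (p : ℕ) (hp : p.Prime) (α : ℕ) (hα : 1 ≤ α)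
    (x : E → ZMod (p ^ α))
    (c : ℕ → ℕ)
    (hc : ∀ k : ℕ, c k = Nat.card (Quot (fun i j : I =>
      ∃ e : E, (¬ ∃ z : ZMod (p ^ α), x e = (p : ZMod (p ^ α)) ^ k * z)
        ∧ s e = i ∧ t e = j))) :
    Nat.card {g : I → (ZMod (p ^ α))ˣ //
        ∀ e : E, ((g (t e) : ZMod (p ^ α)) - (g (s e) : ZMod (p ^ α))) * x e = 0}
      = (p - 1) ^ (c α) * p ^ (∑ k ∈ Finset.Icc 1 (α - 1), c k) :=
  stmt_14_general s t p hp α hα x c hc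
end

section
/- Let n ≥ 1, k ≥ 1, and R = ℂ[X]/(X^k). Let Y ∈ Matₙ(R) be a diagonal matrix such that the constant terms (coefficients of X⁰) of its diagonal entries are pairwise distinct. Suppose g ∈ GLₙ(R) is such that gYg⁻¹ − Y is a diagonal matrix all of whose entries are divisible by X. Then g is a diagonal matrix and gYg⁻¹ = Y. -/
/-! Write `Y' = g Y g⁻¹`, so that `g Y = Y' g` with `Y, Y'` diagonal. Entrywise this reads
`g i j * (Y j j - Y' i i) = 0`. Modulo `X`, `Y' i i` agrees with `Y i i`, so for `i ≠ j` the
factor `Y j j - Y' i i` has nonzero constant term; as `ℂ[X]/(X^k)` is local with nilpotent maximal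
ideal `(X)`, it is a unit and `g i j = 0`. A diagonal `g` then commutes with `Y`. -/

/-- The truncated polynomial ring `ℂ[X]/(X^k)`. -/
noncomputable abbrev TruncPolyRing (k : ℕ) : Type :=
  Polynomial ℂ ⧸ Ideal.span {(Polynomial.X : Polynomial ℂ) ^ k}

open Polynomial

theorem isUnit_of_map_ne_zero_of_isNilpotent {R K : Type*} [CommRing R] [Field K]
    (π : R →+* K) (hπ : Function.Surjective π) (hker : ∀ a, π a = 0 → IsNilpotent a) {a : R}
    (ha : π a ≠ 0) : IsUnit a := by
  obtain ⟨b, hb⟩ := hπ (π a)⁻¹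
  have hnil : IsNilpotent (a * b - 1) := hker _ (by simp [hb, ha])
  have hab : IsUnit (a * b) := by simpa using hnil.isUnit_add_one
  exact isUnit_of_mul_isUnit_left hab

theorem Polynomial.isNilpotent_mk_span_X_pow_of_eval_zero {R : Type*} [CommRing R] {k : ℕ}
    {q : R[X]} (hq : q.eval 0 = 0) : IsNilpotent (Ideal.Quotient.mk (Ideal.span {X ^ k}) q) := by
  obtain ⟨r, rfl⟩ : X ∣ q := X_dvd_iff.2 (by rwa [coeff_zero_eq_eval_zero])
  refine ⟨k, ?_⟩
  rw [← map_pow, mul_pow, Ideal.Quotient.eq_zero_iff_mem]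
  exact Ideal.mul_mem_right _ _ (Ideal.subset_span rfl)

namespace TruncPolyRing

variable {k : ℕ} (π : TruncPolyRing k →+* ℂ)

theorem isUnit_of_map_ne_zero
    (hπ : ∀ q : ℂ[X], π (Ideal.Quotient.mk (Ideal.span {(X : ℂ[X]) ^ k}) q) = q.eval 0)
    {a : TruncPolyRing k} (ha : π a ≠ 0) : IsUnit a := by
  refine isUnit_of_map_ne_zero_of_isNilpotent π (fun c => ⟨_, (hπ (C c)).trans (eval_C ..)⟩)
    (fun a h => ?_) ha
  obtain ⟨q, rfl⟩ := Ideal.Quotient.mk_surjective a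
  exact isNilpotent_mk_span_X_pow_of_eval_zero ((hπ q).symm.trans h)

theorem map_mk_X_mul
    (hπ : ∀ q : ℂ[X], π (Ideal.Quotient.mk (Ideal.span {(X : ℂ[X]) ^ k}) q) = q.eval 0)
    (y : TruncPolyRing k) :
    π (Ideal.Quotient.mk (Ideal.span {(X : ℂ[X]) ^ k}) X * y) = 0 := by
  rw [map_mul, hπ, eval_X, zero_mul]

end TruncPolyRing

theorem Matrix.IsDiag.apply_eq_zero_of_mul_eq_mul {n R : Type*} [Fintype n] [DecidableEq n]
    [CommRing R] {g A B : Matrix n n R} (hA : A.IsDiag) (hB : B.IsDiag) (h : g * A = B * g)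
    {i j : n} (hu : IsUnit (A j j - B i i)) : g i j = 0 := by
  rw [← hA.diagonal_diag, ← hB.diagonal_diag] at h
  have hij := congr_fun (congr_fun h i) j
  simp only [mul_diagonal, diagonal_mul, diag] at hij
  exact hu.mul_left_eq_zero.1 (by linear_combination hij)

theorem Matrix.IsDiag.commute {n R : Type*} [Fintype n] [DecidableEq n] [CommSemiring R]
    {A B : Matrix n n R} (hA : A.IsDiag) (hB : B.IsDiag) : Commute A B := by
  rw [← hA.diagonal_diag, ← hB.diagonal_diag]
  exact commute_diagonal _ _

theorem stmt_17_general (n k : ℕ)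
    (π : TruncPolyRing k →+* ℂ)
    (hπ : ∀ q : Polynomial ℂ,
      π (Ideal.Quotient.mk (Ideal.span {(Polynomial.X : Polynomial ℂ) ^ k}) q) = q.eval 0)
    (Y : Matrix (Fin n) (Fin n) (TruncPolyRing k))
    (hYdiag : ∀ i j, i ≠ j → Y i j = 0)
    (hYreg : Function.Injective (fun i => π (Y i i)))
    (g : (Matrix (Fin n) (Fin n) (TruncPolyRing k))ˣ)
    (hDdiag : ∀ i j, i ≠ j → (g.val * Y * g⁻¹.val - Y) i j = 0)
    (hDdivX : ∀ i j, ∃ y : TruncPolyRing k,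
      (g.val * Y * g⁻¹.val - Y) i j
        = Ideal.Quotient.mk (Ideal.span {(Polynomial.X : Polynomial ℂ) ^ k}) Polynomial.X * y) :
    (∀ i j, i ≠ j → g.val i j = 0) ∧ g.val * Y * g⁻¹.val = Y := by
  set Y' := g.val * Y * g⁻¹.val
  have hY' : Y'.IsDiag := by simpa using Matrix.IsDiag.add hYdiag hDdiag
  have hgY : g.val * Y = Y' * g.val := by simp [Y', Matrix.mul_assoc]
  have hπY' : ∀ i, π (Y' i i) = π (Y i i) := fun i => by
    obtain ⟨y, hy⟩ := hDdivX i i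
    rw [← sub_eq_zero, ← map_sub, ← Matrix.sub_apply, hy, TruncPolyRing.map_mk_X_mul π hπ]
  have hoff : ∀ i j, i ≠ j → g.val i j = 0 := fun i j hij =>
    Matrix.IsDiag.apply_eq_zero_of_mul_eq_mul hYdiag hY' hgY <|
      TruncPolyRing.isUnit_of_map_ne_zero π hπ <| by
        rw [map_sub, hπY', sub_ne_zero]
        exact fun h => hij (hYreg h).symm
  exact ⟨hoff, (Units.mul_inv_eq_iff_eq_mul g).2 (Matrix.IsDiag.commute hoff hYdiag).eq⟩

theorem stmt_17 (n k : ℕ) (hn : 1 ≤ n) (hk : 1 ≤ k)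
    (π : TruncPolyRing k →+* ℂ)
    (hπ : ∀ q : Polynomial ℂ,
      π (Ideal.Quotient.mk (Ideal.span {(Polynomial.X : Polynomial ℂ) ^ k}) q) = q.eval 0)
    (Y : Matrix (Fin n) (Fin n) (TruncPolyRing k))
    (hYdiag : ∀ i j, i ≠ j → Y i j = 0)
    (hYreg : Function.Injective (fun i => π (Y i i)))
    (g : (Matrix (Fin n) (Fin n) (TruncPolyRing k))ˣ)
    (hDdiag : ∀ i j, i ≠ j → (g.val * Y * g⁻¹.val - Y) i j = 0)
    (hDdivX : ∀ i j, ∃ y : TruncPolyRing k,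
      (g.val * Y * g⁻¹.val - Y) i j
        = Ideal.Quotient.mk (Ideal.span {(Polynomial.X : Polynomial ℂ) ^ k}) Polynomial.X * y) :
    (∀ i j, i ≠ j → g.val i j = 0) ∧ g.val * Y * g⁻¹.val = Y :=
  stmt_17_general n k π hπ Y hYdiag hYreg g hDdiag hDdivX
end

section
/- Let n ≥ 1, k ≥ 1, and R = ℂ[X]/(X^k). Let g ∈ Matₙ(R) be a diagonal invertible matrix with all entries constant (each diagonal entry is the image of a nonzero complex number), and let h ∈ GLₙ(R) satisfy h ≡ 1 (the identity matrix) modulo X, i.e. every entry of h − 1 is divisible by X. If hgh⁻¹ is a diagonal matrix, then hgh⁻¹ = g. -/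
/-!
Put `d = h g h⁻¹`, so `d h = h g`. As `d` and `g` are diagonal, the `(i, i)` entry of this identity
reads `d i i * h i i = h i i * g i i`, and `h i i = 1 + X y` is a unit because `X` is nilpotent.
-/

namespace Matrix

variable {n α : Type*} [Fintype n]

theorem IsDiag.mul_left_apply_self [NonUnitalNonAssocSemiring α] {d : Matrix n n α} (hd : d.IsDiag)
    (h : Matrix n n α) (i : n) : (d * h) i i = d i i * h i i := by
  rw [mul_apply]
  exact Finset.sum_eq_single i (fun j _ hji => by rw [hd hji.symm, zero_mul]) (by simp)

theorem IsDiag.mul_right_apply_self [NonUnitalNonAssocSemiring α] {d : Matrix n n α} (hd : d.IsDiag)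
    (h : Matrix n n α) (i : n) : (h * d) i i = h i i * d i i := by
  rw [mul_apply]
  exact Finset.sum_eq_single i (fun j _ hji => by rw [hd hji, mul_zero]) (by simp)

theorem IsDiag.eq_of_mul_eq_mul_of_isUnit_diag [CommSemiring α] {d g h : Matrix n n α}
    (hd : d.IsDiag) (hg : g.IsDiag) (hdh : d * h = h * g) (hunit : ∀ i, IsUnit (h i i)) :
    d = g := by
  ext i j
  obtain rfl | hij := eq_or_ne i j
  · refine (hunit i).mul_right_cancel ?_
    rw [← hd.mul_left_apply_self, hdh, hg.mul_right_apply_self, mul_comm]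
  · rw [hd hij, hg hij]

end Matrix

theorem Polynomial.isNilpotent_mk_X {R : Type*} [CommRing R] (k : ℕ) :
    IsNilpotent (Ideal.Quotient.mk (Ideal.span {(X : Polynomial R) ^ k}) X) :=
  ⟨k, by rw [← map_pow, Ideal.Quotient.eq_zero_iff_mem]; exact Ideal.mem_span_singleton_self _⟩

theorem stmt_18_general (n k : ℕ)
    (g h : (Matrix (Fin n) (Fin n) (TruncPolyRing k))ˣ)
    (hgdiag : ∀ i j, i ≠ j → g.val i j = 0)
    (hh1 : ∀ i j, ∃ y : TruncPolyRing k, (h.val - 1) i j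
      = Ideal.Quotient.mk (Ideal.span {(Polynomial.X : Polynomial ℂ) ^ k}) Polynomial.X * y)
    (hdiag : ∀ i j, i ≠ j → (h.val * g.val * h⁻¹.val) i j = 0) :
    h.val * g.val * h⁻¹.val = g.val := by
  refine Matrix.IsDiag.eq_of_mul_eq_mul_of_isUnit_diag (h := h.val) (fun i j => hdiag i j)
    (fun i j => hgdiag i j) ?_ fun i => ?_
  · rw [Matrix.mul_assoc _ h⁻¹.val, Units.inv_mul, Matrix.mul_one]
  · obtain ⟨y, hy⟩ := hh1 i i
    have hnil : IsNilpotent ((h.val - 1) i i) :=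
      hy ▸ (Commute.all _ y).isNilpotent_mul_right (Polynomial.isNilpotent_mk_X k)
    simpa using hnil.isUnit_one_add

theorem stmt_18 (n k : ℕ) (hn : 1 ≤ n) (hk : 1 ≤ k)
    (g h : (Matrix (Fin n) (Fin n) (TruncPolyRing k))ˣ)
    (hgdiag : ∀ i j, i ≠ j → g.val i j = 0)
    (hgconst : ∀ i, ∃ c : ℂ, c ≠ 0 ∧ g.val i i
      = Ideal.Quotient.mk (Ideal.span {(Polynomial.X : Polynomial ℂ) ^ k}) (Polynomial.C c))
    (hh1 : ∀ i j, ∃ y : TruncPolyRing k, (h.val - 1) i j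
      = Ideal.Quotient.mk (Ideal.span {(Polynomial.X : Polynomial ℂ) ^ k}) Polynomial.X * y)
    (hdiag : ∀ i j, i ≠ j → (h.val * g.val * h⁻¹.val) i j = 0) :
    h.val * g.val * h⁻¹.val = g.val :=
  stmt_18_general n k g h hgdiag hh1 hdiag
end
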